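/- arXiv:1206.1137 — 9 statements merged into one kernel-verified Lean document; each statement's English description precedes it below -/
import Mathlib

section
/- Let P be a Markov transition kernel on a measurable space X and V : X → [1,∞) measurable with PV finite everywhere. Suppose P^N V ≤ δ^N V + L·1_X pointwise for some N ∈ ℕ*, δ ∈ (0,1), L > 0. Then for every continuous linear functional f' on B_V (the space of f with sup |f|/V < ∞), the adjoint satisfies ‖(P*)^N f'‖_{B_V'} ≤ δ^N ‖f'‖_{B_V'} + L ‖f'‖_{B_0'}, where ‖g'‖_{B_0'} = ⟨|g'|, 1_X⟩ and ‖g'‖_{B_V'} = ⟨|g'|, V⟩ using the Banach lattice structure of the dual. -/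
open MeasureTheory ProbabilityTheory ENNReal

/-- Iterates `P^n` of a transition kernel. -/
noncomputable def kpow {X : Type*} [MeasurableSpace X] (P : Kernel X X) : ℕ → Kernel X X
  | 0 => Kernel.id
  | n + 1 => P ∘ₖ kpow P n

instance kpow_markov {X : Type*} [MeasurableSpace X] (P : Kernel X X) [IsMarkovKernel P]
    (n : ℕ) : IsMarkovKernel (kpow P n) := by
  induction n with
  | zero => exact inferInstanceAs (IsMarkovKernel Kernel.id)
  | succ n ih => exact inferInstanceAs (IsMarkovKernel (P ∘ₖ kpow P n))

instance bind_markov_finite {X : Type*} [MeasurableSpace X] (μ : Measure X)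
    [IsFiniteMeasure μ] (P : Kernel X X) [IsMarkovKernel P] :
    IsFiniteMeasure (μ.bind (fun x => P x)) := by
  constructor
  rw [Measure.bind_apply MeasurableSet.univ (Kernel.measurable P).aemeasurable]
  calc ∫⁻ x, (P x) Set.univ ∂μ ≤ ∫⁻ _, 1 ∂μ := by
        exact lintegral_mono fun x => le_of_eq (measure_univ)
    _ < ⊤ := by simp

/-- The adjoint `P*` of a Markov kernel acting on a continuous linear functional on `B_V`,
identified with a finite signed measure (via Jordan decomposition). -/
noncomputable def kAdj {X : Type*} [MeasurableSpace X] (P : Kernel X X) [IsMarkovKernel P]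
    (s : SignedMeasure X) : SignedMeasure X :=
  (s.toJordanDecomposition.posPart.bind (fun x => P x)).toSignedMeasure -
    (s.toJordanDecomposition.negPart.bind (fun x => P x)).toSignedMeasure

/-
The adjoint moves the positive and negative parts of `s` separately, so `|(P*)^N s|` is dominated
by `(P^N)*|s|`; integrating `V` against the latter is integrating `P^N V`, where the drift bound
applies.
-/

namespace MeasureTheory

lemma SignedMeasure.totalVariation_sub_toSignedMeasure_le {X : Type*} [MeasurableSpace X]
    (μ ν : Measure X) [IsFiniteMeasure μ] [IsFiniteMeasure ν] :
    (μ.toSignedMeasure - ν.toSignedMeasure).totalVariation ≤ μ + ν := by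
  rw [totalVariation_eq_variation]
  calc _ ≤ μ.toSignedMeasure.variation + ν.toSignedMeasure.variation :=
        VectorMeasure.variation_sub_le
    _ = μ + ν := by simp only [Measure.variation_toSignedMeasure]

lemma lintegral_bind_le_of_drift {X Y : Type*} [MeasurableSpace X] [MeasurableSpace Y]
    (Q : Kernel X Y) {V : Y → ℝ} (hV : Measurable V) {W : X → ℝ} {c L : ℝ} (hc : 0 ≤ c)
    (hdrift : ∀ x, ∫⁻ y, ENNReal.ofReal (V y) ∂(Q x) ≤ ENNReal.ofReal (c * W x + L))
    (μ : Measure X) :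
    ∫⁻ y, ENNReal.ofReal (V y) ∂(μ.bind fun x => Q x)
      ≤ ENNReal.ofReal c * ∫⁻ x, ENNReal.ofReal (W x) ∂μ + ENNReal.ofReal L * μ Set.univ := by
  rw [Measure.lintegral_bind Q.measurable.aemeasurable hV.ennreal_ofReal.aemeasurable]
  calc ∫⁻ x, ∫⁻ y, ENNReal.ofReal (V y) ∂(Q x) ∂μ
      ≤ ∫⁻ x, (ENNReal.ofReal c * ENNReal.ofReal (W x) + ENNReal.ofReal L) ∂μ := by
        refine lintegral_mono fun x => (hdrift x).trans ?_
        rw [← ENNReal.ofReal_mul hc]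
        exact ENNReal.ofReal_add_le
    _ = ENNReal.ofReal c * ∫⁻ x, ENNReal.ofReal (W x) ∂μ + ENNReal.ofReal L * μ Set.univ := by
        rw [lintegral_add_right _ measurable_const, lintegral_const,
          lintegral_const_mul' _ _ ENNReal.ofReal_ne_top]

lemma lintegral_totalVariation_kAdj_le_of_drift {X : Type*} [MeasurableSpace X]
    (Q : Kernel X X) [IsMarkovKernel Q] {V : X → ℝ} (hV : Measurable V) {c L : ℝ} (hc : 0 ≤ c)
    (hdrift : ∀ x, ∫⁻ y, ENNReal.ofReal (V y) ∂(Q x) ≤ ENNReal.ofReal (c * V x + L))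
    (s : SignedMeasure X) :
    ∫⁻ x, ENNReal.ofReal (V x) ∂(kAdj Q s).totalVariation
      ≤ ENNReal.ofReal c * ∫⁻ x, ENNReal.ofReal (V x) ∂s.totalVariation
        + ENNReal.ofReal L * s.totalVariation Set.univ := by
  set μ := s.toJordanDecomposition.posPart
  set ν := s.toJordanDecomposition.negPart
  have hdrift' := lintegral_bind_le_of_drift Q hV hc hdrift
  calc ∫⁻ x, ENNReal.ofReal (V x) ∂(kAdj Q s).totalVariation
      ≤ ∫⁻ x, ENNReal.ofReal (V x) ∂((μ.bind fun x => Q x) + ν.bind fun x => Q x) :=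
        lintegral_mono' (SignedMeasure.totalVariation_sub_toSignedMeasure_le _ _) le_rfl
    _ ≤ (ENNReal.ofReal c * ∫⁻ x, ENNReal.ofReal (V x) ∂μ + ENNReal.ofReal L * μ Set.univ)
          + (ENNReal.ofReal c * ∫⁻ x, ENNReal.ofReal (V x) ∂ν
            + ENNReal.ofReal L * ν Set.univ) := by
        rw [lintegral_add_measure]
        exact add_le_add (hdrift' μ) (hdrift' ν)
    _ = ENNReal.ofReal c * ∫⁻ x, ENNReal.ofReal (V x) ∂s.totalVariation
          + ENNReal.ofReal L * s.totalVariation Set.univ := by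
        rw [SignedMeasure.totalVariation, lintegral_add_measure, Measure.add_apply]
        ring

end MeasureTheory

theorem stmt1_general {X : Type*} [MeasurableSpace X] (P : Kernel X X) [IsMarkovKernel P]
    (V : X → ℝ) (hVm : Measurable V)
    (N : ℕ) (δ L : ℝ) (hδ : δ ∈ Set.Ioo (0 : ℝ) 1)
    (hdrift : ∀ x, ∫⁻ y, ENNReal.ofReal (V y) ∂(kpow P N x)
      ≤ ENNReal.ofReal (δ ^ N * V x + L))
    (s : SignedMeasure X) :
    ∫⁻ x, ENNReal.ofReal (V x) ∂(kAdj (kpow P N) s).totalVariation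
      ≤ ENNReal.ofReal (δ ^ N) * ∫⁻ x, ENNReal.ofReal (V x) ∂s.totalVariation
        + ENNReal.ofReal L * s.totalVariation Set.univ :=
  lintegral_totalVariation_kAdj_le_of_drift (kpow P N) hVm (pow_nonneg hδ.1.le N) hdrift s

/-- Doeblin–Fortet inequality on the dual:
under the drift condition `P^N V ≤ δ^N V + L 1_X`, for every `f'` in the dual of `B_V`
(identified with a signed measure `s`, with `‖g'‖_{B_V'} = ⟨|g'|, V⟩` and
`‖g'‖_{B_0'} = ⟨|g'|, 1_X⟩`), one has
`‖(P*)^N f'‖_{B_V'} ≤ δ^N ‖f'‖_{B_V'} + L ‖f'‖_{B_0'}`. -/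
theorem stmt1 {X : Type*} [MeasurableSpace X] (P : Kernel X X) [IsMarkovKernel P]
    (V : X → ℝ) (hVm : Measurable V) (hV : ∀ x, 1 ≤ V x)
    (N : ℕ) (hN : 0 < N) (δ L : ℝ) (hδ : δ ∈ Set.Ioo (0 : ℝ) 1) (hL : 0 < L)
    (hdrift : ∀ x, ∫⁻ y, ENNReal.ofReal (V y) ∂(kpow P N x)
      ≤ ENNReal.ofReal (δ ^ N * V x + L))
    (s : SignedMeasure X) :
    ∫⁻ x, ENNReal.ofReal (V x) ∂(kAdj (kpow P N) s).totalVariation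
      ≤ ENNReal.ofReal (δ ^ N) * ∫⁻ x, ENNReal.ofReal (V x) ∂s.totalVariation
        + ENNReal.ofReal L * s.totalVariation Set.univ :=
  stmt1_general P V hVm N δ L hδ hdrift s
end

section
/- Let P be a Markov kernel on X satisfying P^N V ≤ δ^N V + L·1_X for some N ≥ 1, δ ∈ (0,1), L > 0 and V : X → [1,∞). Then the family of iterates (P^n)_{n∈ℕ} is bounded in operator norm on B_V, i.e. sup_n ‖P^n‖_{B_V} < ∞. -/
open MeasureTheory ProbabilityTheory ENNReal

lemma kpow_markov_s2 {X : Type*} [MeasurableSpace X] (P : Kernel X X) [IsMarkovKernel P] (n : ℕ) :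
    IsMarkovKernel (kpow P n) := by
  induction n with
  | zero => rw [kpow]; infer_instance
  | succ n ih => rw [kpow]; exact Kernel.IsMarkovKernel.comp P (kpow P n)

lemma kpow_add {X : Type*} [MeasurableSpace X] (P : Kernel X X) [IsMarkovKernel P] (m n : ℕ) :
    kpow P (m + n) = kpow P m ∘ₖ kpow P n := by
  induction m with
  | zero => simp [kpow, Kernel.id_comp]
  | succ m ih =>
      have : m + 1 + n = (m + n) + 1 := by omega
      rw [this, kpow, ih, kpow, Kernel.comp_assoc]

/-- under the drift condition `P^N V ≤ δ^N V + L 1_X`, the iterates `(P^n)_n`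
are bounded in operator norm on `B_V`, i.e. `sup_n ‖P^n‖_{B_V} < ∞`; equivalently there is a
finite constant `C` with `P^n V ≤ C·V` for all `n`. -/
theorem stmt2 {X : Type*} [MeasurableSpace X] (P : Kernel X X) [IsMarkovKernel P]
    (V : X → ℝ) (hVm : Measurable V) (hV : ∀ x, 1 ≤ V x)
    (N : ℕ) (hN : 1 ≤ N) (δ L : ℝ) (hδ : δ ∈ Set.Ioo (0 : ℝ) 1) (hL : 0 < L)
    (hPbdd : ∃ c : ℝ, ∀ x, ∫⁻ y, ENNReal.ofReal (V y) ∂(P x) ≤ ENNReal.ofReal (c * V x))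
    (hdrift : ∀ x, ∫⁻ y, ENNReal.ofReal (V y) ∂(kpow P N x)
      ≤ ENNReal.ofReal (δ ^ N * V x + L)) :
    ∃ C : ℝ≥0∞, C < ⊤ ∧ ∀ n : ℕ, ∀ x,
      ∫⁻ y, ENNReal.ofReal (V y) ∂(kpow P n x) ≤ C * ENNReal.ofReal (V x) := by
  obtain ⟨c, hc⟩ := hPbdd
  obtain ⟨hδ0, hδ1⟩ := hδ
  set M : ℝ := max c 1 with hMdef
  have hM1 : (1 : ℝ) ≤ M := le_max_right _ _
  have hM0 : (0 : ℝ) ≤ M := by linarith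
  set a : ℝ := δ ^ N with hadef
  have ha0 : 0 < a := pow_pos hδ0 N
  have ha1 : a < 1 := pow_lt_one₀ hδ0.le hδ1 (by omega)
  have hVnn : ∀ x, 0 ≤ V x := fun x => le_trans zero_le_one (hV x)
  have hmV : Measurable fun y => ENNReal.ofReal (V y) := hVm.ennreal_ofReal
  haveI hMarkov : ∀ n, IsMarkovKernel (kpow P n) := kpow_markov_s2 P
  -- bound for ∫ (s * V + t) against any kernel-power measure
  have hlin : ∀ (k : ℕ) (x : X) (s t : ℝ), 0 ≤ s → 0 ≤ t →
      ∫⁻ y, ENNReal.ofReal (s * V y + t) ∂(kpow P k x)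
        = ENNReal.ofReal s * (∫⁻ y, ENNReal.ofReal (V y) ∂(kpow P k x)) + ENNReal.ofReal t := by
    intro k x s t hs ht
    haveI := hMarkov k
    have : ∀ y, ENNReal.ofReal (s * V y + t)
        = ENNReal.ofReal s * ENNReal.ofReal (V y) + ENNReal.ofReal t := by
      intro y
      rw [ENNReal.ofReal_add (mul_nonneg hs (hVnn y)) ht, ENNReal.ofReal_mul hs]
    simp_rw [this]
    rw [lintegral_add_right _ measurable_const, lintegral_const_mul _ hmV, lintegral_const,
      measure_univ, mul_one]
  -- rough bound for small iterates
  have hJ : ∀ r x, ∫⁻ y, ENNReal.ofReal (V y) ∂(kpow P r x) ≤ ENNReal.ofReal (M ^ r * V x) := by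
    intro r
    induction r with
    | zero =>
        intro x
        simp only [kpow, Kernel.id_apply, pow_zero, one_mul]
        rw [lintegral_dirac' _ hmV]
    | succ r ih =>
        intro x
        rw [kpow, Kernel.lintegral_comp _ _ _ hmV]
        calc ∫⁻ y, ∫⁻ z, ENNReal.ofReal (V z) ∂(P y) ∂(kpow P r x)
            ≤ ∫⁻ y, ENNReal.ofReal (M * V y) ∂(kpow P r x) := by
              refine lintegral_mono fun y => le_trans (hc y) ?_
              exact ENNReal.ofReal_le_ofReal
                (mul_le_mul_of_nonneg_right (le_max_left c 1) (hVnn y))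
          _ = ENNReal.ofReal M * ∫⁻ y, ENNReal.ofReal (V y) ∂(kpow P r x) + 0 := by
              have := hlin r x M 0 hM0 le_rfl
              simpa using this
          _ ≤ ENNReal.ofReal M * ENNReal.ofReal (M ^ r * V x) + 0 := by
              gcongr
              exact ih x
          _ = ENNReal.ofReal (M ^ (r + 1) * V x) := by
              rw [add_zero, ← ENNReal.ofReal_mul hM0]
              ring_nf
  -- block bound along multiples of N
  have hI : ∀ q x, ∫⁻ y, ENNReal.ofReal (V y) ∂(kpow P (N * q) x)
      ≤ ENNReal.ofReal (a ^ q * V x + L * ∑ i ∈ Finset.range q, a ^ i) := by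
    intro q
    induction q with
    | zero =>
        intro x
        simp only [Nat.mul_zero, kpow, Kernel.id_apply]
        rw [lintegral_dirac' _ hmV]
        simp
    | succ q ih =>
        intro x
        set bq : ℝ := L * ∑ i ∈ Finset.range q, a ^ i with hbq
        have hbq0 : 0 ≤ bq :=
          mul_nonneg hL.le (Finset.sum_nonneg fun i _ => pow_nonneg ha0.le i)
        have hstep : N * (q + 1) = N * q + N := by ring
        rw [hstep, kpow_add, Kernel.lintegral_comp _ _ _ hmV]
        calc ∫⁻ y, ∫⁻ z, ENNReal.ofReal (V z) ∂(kpow P (N * q) y) ∂(kpow P N x)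
            ≤ ∫⁻ y, ENNReal.ofReal (a ^ q * V y + bq) ∂(kpow P N x) :=
              lintegral_mono fun y => ih y
          _ = ENNReal.ofReal (a ^ q) * (∫⁻ y, ENNReal.ofReal (V y) ∂(kpow P N x))
                + ENNReal.ofReal bq := hlin N x _ _ (pow_nonneg ha0.le q) hbq0
          _ ≤ ENNReal.ofReal (a ^ q) * ENNReal.ofReal (a * V x + L) + ENNReal.ofReal bq := by
              gcongr
              exact hdrift x
          _ ≤ ENNReal.ofReal (a ^ (q + 1) * V x + L * ∑ i ∈ Finset.range (q + 1), a ^ i) := by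
              rw [← ENNReal.ofReal_mul (pow_nonneg ha0.le q),
                ← ENNReal.ofReal_add (mul_nonneg (pow_nonneg ha0.le q)
                  (by nlinarith [hVnn x])) hbq0]
              apply ENNReal.ofReal_le_ofReal
              apply le_of_eq
              rw [hbq, Finset.sum_range_succ]
              ring
  -- geometric sum bound
  have h1a : (0:ℝ) < 1 - a := by linarith
  have hsum : ∀ q : ℕ, L * ∑ i ∈ Finset.range q, a ^ i ≤ L / (1 - a) := by
    intro q
    have hq : (0:ℝ) ≤ a ^ q := pow_nonneg ha0.le q
    have key : ∑ i ∈ Finset.range q, a ^ i ≤ 1 / (1 - a) := by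
      rw [geom_sum_eq ha1.ne]
      have e : (a ^ q - 1) / (a - 1) = (1 - a ^ q) / (1 - a) := by
        rw [← neg_sub (1:ℝ) (a ^ q), ← neg_sub (1:ℝ) a, neg_div_neg_eq]
      rw [e]
      gcongr
      linarith
    calc L * ∑ i ∈ Finset.range q, a ^ i ≤ L * (1 / (1 - a)) :=
          mul_le_mul_of_nonneg_left key hL.le
      _ = L / (1 - a) := by ring
  set B : ℝ := L / (1 - a) with hBdef
  have hB0 : 0 ≤ B := div_nonneg hL.le h1a.le
  refine ⟨ENNReal.ofReal (M ^ N + B), ENNReal.ofReal_lt_top, ?_⟩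
  intro n x
  set q : ℕ := n / N with hqdef
  set r : ℕ := n % N with hrdef
  have hrN : r < N := Nat.mod_lt _ (by omega)
  have hdec : n = N * q + r := (Nat.div_add_mod n N).symm
  haveI := hMarkov r
  rw [hdec, kpow_add, Kernel.lintegral_comp _ _ _ hmV]
  set bq : ℝ := L * ∑ i ∈ Finset.range q, a ^ i with hbq
  have hbq0 : 0 ≤ bq := mul_nonneg hL.le (Finset.sum_nonneg fun i _ => pow_nonneg ha0.le i)
  have haq : (0:ℝ) ≤ a ^ q := pow_nonneg ha0.le q
  calc ∫⁻ y, ∫⁻ z, ENNReal.ofReal (V z) ∂(kpow P (N * q) y) ∂(kpow P r x)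
      ≤ ∫⁻ y, ENNReal.ofReal (a ^ q * V y + bq) ∂(kpow P r x) :=
        lintegral_mono fun y => hI q y
    _ = ENNReal.ofReal (a ^ q) * (∫⁻ y, ENNReal.ofReal (V y) ∂(kpow P r x))
          + ENNReal.ofReal bq := hlin r x _ _ haq hbq0
    _ ≤ ENNReal.ofReal (a ^ q) * ENNReal.ofReal (M ^ r * V x) + ENNReal.ofReal bq := by
        gcongr
        exact hJ r x
    _ ≤ ENNReal.ofReal (a ^ q * (M ^ r * V x) + B) := by
        rw [ENNReal.ofReal_add (mul_nonneg haq (mul_nonneg (pow_nonneg hM0 r) (hVnn x))) hB0,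
          ENNReal.ofReal_mul haq]
        gcongr
        exact hbq ▸ hsum q
    _ ≤ ENNReal.ofReal ((M ^ N + B) * V x) := by
        apply ENNReal.ofReal_le_ofReal
        have h1 : a ^ q ≤ 1 := pow_le_one₀ ha0.le ha1.le
        have h2 : M ^ r ≤ M ^ N := pow_le_pow_right₀ hM1 hrN.le
        have h3 : (0:ℝ) ≤ M ^ r := pow_nonneg hM0 r
        have h4 : a ^ q * (M ^ r * V x) ≤ M ^ N * V x := by
          calc a ^ q * (M ^ r * V x) ≤ 1 * (M ^ N * V x) := by
                apply mul_le_mul h1 (mul_le_mul_of_nonneg_right h2 (hVnn x))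
                  (mul_nonneg h3 (hVnn x)) zero_le_one
            _ = M ^ N * V x := one_mul _
        nlinarith [hV x, hB0]
    _ = ENNReal.ofReal (M ^ N + B) * ENNReal.ofReal (V x) := by
        rw [ENNReal.ofReal_mul (by positivity)]
end

section
/- Let e' be a positive continuous linear functional on B_V (V ≥ 1, measurable) and let π be the probability measure defined by π(A) = e'(1_A). Then π and e' coincide on all bounded measurable functions, π(V) ≤ e'(V) < ∞, and hence f ↦ π(f) defines an element of B_V'. -/
open MeasureTheory Set

/-!
Both `f ↦ ∫ f ∂π` and `e'` are linear and agree on indicators of measurable sets, hence on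
simple functions. Positivity gives `|e' h| ≤ ε e'(V)` whenever `|h| ≤ ε`, so both functionals are
uniformly continuous for the sup norm on bounded functions, and uniform approximation by simple
functions gives `π(f) = e'(f)` for bounded measurable `f`. Applied to the truncations `min V n`,
which increase to `V`, monotone convergence yields `π(V) ≤ e'(V)`; then `|π(f)| ≤ π(V)` for
`|f| ≤ V`.
-/

/-- The space `B_V` of functions dominated by a multiple of the weight `V`, as a submodule of
`X → ℝ`. -/
def BV {X : Type*} (V : X → ℝ) : Submodule ℝ (X → ℝ) where
  carrier := {f | ∃ C : ℝ, ∀ x, |f x| ≤ C * V x}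
  zero_mem' := ⟨0, by intro x; simp⟩
  add_mem' := by
    rintro f g ⟨C, hC⟩ ⟨D, hD⟩
    refine ⟨C + D, fun x => ?_⟩
    calc |f x + g x| ≤ |f x| + |g x| := abs_add_le _ _
      _ ≤ C * V x + D * V x := add_le_add (hC x) (hD x)
      _ = (C + D) * V x := by ring
  smul_mem' := by
    rintro c f ⟨C, hC⟩
    refine ⟨|c| * C, fun x => ?_⟩
    calc |(c • f) x| = |c| * |f x| := by simp [abs_mul]
      _ ≤ |c| * (C * V x) := by
          exact mul_le_mul_of_nonneg_left (hC x) (abs_nonneg c)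
      _ = |c| * C * V x := by ring

/-- The indicator function `1_A` as an element of `B_V` (for `V ≥ 1`). -/
noncomputable def BV.ind {X : Type*} (V : X → ℝ) (hV : ∀ x, 1 ≤ V x) (A : Set X) : BV V :=
  ⟨A.indicator 1, ⟨1, fun x => by
    by_cases h : x ∈ A <;>
      simp [Set.indicator_apply, h, le_trans zero_le_one (hV x), (hV x)]⟩⟩

/-- The weight `V` itself as an element of `B_V`. -/
def BV.wt {X : Type*} (V : X → ℝ) (hV : ∀ x, 1 ≤ V x) : BV V :=
  ⟨V, ⟨1, fun x => by rw [one_mul]; exact le_of_eq (abs_of_pos (lt_of_lt_of_le one_pos (hV x)))⟩⟩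

open Filter Topology

lemma eq_of_forall_abs_sub_le_mul {a b K : ℝ} (h : ∀ ε > 0, |a - b| ≤ ε * K) : a = b := by
  have hlim : Tendsto (fun ε : ℝ => ε * K) (𝓝[>] 0) (𝓝 0) :=
    ((continuous_mul_const K).tendsto' 0 0 (zero_mul K)).mono_left nhdsWithin_le_nhds
  have : |a - b| ≤ 0 := ge_of_tendsto hlim (eventually_nhdsWithin_of_forall h)
  exact sub_eq_zero.mp (abs_nonpos_iff.mp this)

lemma abs_sub_floor_div_mul_le {ε : ℝ} (hε : 0 < ε) (y : ℝ) : |y - ⌊y / ε⌋ * ε| ≤ ε := by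
  have hy : y - ⌊y / ε⌋ * ε = ε * Int.fract (y / ε) := by
    rw [← Int.self_sub_floor]; field_simp
  rw [hy, abs_of_nonneg (mul_nonneg hε.le (Int.fract_nonneg _))]
  exact mul_le_of_le_one_right hε.le (Int.fract_lt_one _).le

section Approximation

variable {X : Type*} [MeasurableSpace X]

lemma exists_sum_indicator_approx {f : X → ℝ} (hf : Measurable f) {C : ℝ}
    (hC : ∀ x, |f x| ≤ C) {ε : ℝ} (hε : 0 < ε) :
    ∃ (s : Finset ℤ) (c : ℤ → ℝ) (A : ℤ → Set X), (∀ k, MeasurableSet (A k)) ∧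
      ∀ x, |f x - ∑ k ∈ s, c k * (A k).indicator 1 x| ≤ ε := by
  set N : ℤ := ⌈C / ε⌉
  refine ⟨Finset.Icc (-N) N, fun k => k * ε, fun k => {x | ⌊f x / ε⌋ = k},
    fun k => (hf.div_const ε).floor (measurableSet_singleton k), fun x => ?_⟩
  have hN : |f x / ε| ≤ N := by
    rw [abs_div, abs_of_pos hε]
    exact (div_le_div_of_nonneg_right (hC x) hε.le).trans (Int.le_ceil _)
  have hmem : ⌊f x / ε⌋ ∈ Finset.Icc (-N) N := by
    rw [Finset.mem_Icc]
    constructor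
    · exact Int.le_floor.mpr (by push_cast; linarith [neg_abs_le (f x / ε)])
    · simpa using Int.floor_le_floor ((le_abs_self _).trans hN)
  simpa [Set.indicator_apply, Finset.sum_ite_eq, hmem] using abs_sub_floor_div_mul_le hε (f x)

lemma lintegral_ofReal_le_of_integral_min_le {μ : Measure X} [IsFiniteMeasure μ] {g : X → ℝ}
    (hg : Measurable g) (hg0 : ∀ x, 0 ≤ g x) {c : ℝ} (h : ∀ n : ℕ, ∫ x, min (g x) n ∂μ ≤ c) :
    ∫⁻ x, ENNReal.ofReal (g x) ∂μ ≤ ENNReal.ofReal c := by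
  have hmin : ∀ n : ℕ, Measurable fun x => min (g x) n := fun n => hg.min measurable_const
  have hsup : ∀ x, ENNReal.ofReal (g x) = ⨆ n : ℕ, ENNReal.ofReal (min (g x) n) := by
    intro x
    refine le_antisymm ?_ (iSup_le fun n => ENNReal.ofReal_le_ofReal (min_le_left _ _))
    obtain ⟨n, hn⟩ := exists_nat_ge (g x)
    exact le_iSup_of_le n (by rw [min_eq_left hn])
  rw [lintegral_congr hsup, lintegral_iSup (fun n => (hmin n).ennreal_ofReal)
    fun m n hmn x => ENNReal.ofReal_le_ofReal (min_le_min_left _ (Nat.cast_le.mpr hmn))]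
  refine iSup_le fun n => ?_
  have hint : Integrable (fun x => min (g x) n) μ := by
    refine Integrable.of_bound (hmin n).aestronglyMeasurable n (ae_of_all _ fun x => ?_)
    rw [Real.norm_eq_abs, abs_of_nonneg (le_min (hg0 x) n.cast_nonneg)]
    exact min_le_right _ _
  rw [← ofReal_integral_eq_lintegral_ofReal hint
    (ae_of_all _ fun x => le_min (hg0 x) n.cast_nonneg)]
  exact ENNReal.ofReal_le_ofReal (h n)

end Approximation

lemma LinearMap.map_mono_of_map_nonneg {X : Type*} {p : Submodule ℝ (X → ℝ)} (e : p →ₗ[ℝ] ℝ)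
    (hpos : ∀ f : p, (∀ x, 0 ≤ (f : X → ℝ) x) → 0 ≤ e f) {f g : p}
    (h : ∀ x, (f : X → ℝ) x ≤ (g : X → ℝ) x) : e f ≤ e g := by
  have := hpos (g - f) fun x => by simpa using h x
  rw [map_sub] at this
  linarith

namespace BV

variable {X : Type*} {V : X → ℝ}

@[simp]
lemma coe_ind (hV : ∀ x, 1 ≤ V x) (A : Set X) : (ind V hV A : X → ℝ) = A.indicator 1 := rfl

@[simp]
lemma coe_wt (hV : ∀ x, 1 ≤ V x) : (wt V hV : X → ℝ) = V := rfl

def wtMin (hV : ∀ x, 1 ≤ V x) (n : ℕ) : BV V :=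
  ⟨fun x => min (V x) n, 1, fun x => by
    rw [abs_of_nonneg (le_min (zero_le_one.trans (hV x)) n.cast_nonneg), one_mul]
    exact min_le_left _ _⟩

@[simp]
lemma coe_wtMin (hV : ∀ x, 1 ≤ V x) (n : ℕ) : (wtMin hV n : X → ℝ) = fun x => min (V x) n := rfl

lemma abs_map_le (hV : ∀ x, 1 ≤ V x) (e' : BV V →ₗ[ℝ] ℝ)
    (hpos : ∀ f : BV V, (∀ x, 0 ≤ (f : X → ℝ) x) → 0 ≤ e' f) {f : BV V} {c : ℝ}
    (h : ∀ x, |(f : X → ℝ) x| ≤ c * V x) : |e' f| ≤ c * e' (wt V hV) := by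
  have hup := e'.map_mono_of_map_nonneg hpos (f := f) (g := c • wt V hV)
    fun x => by simpa using (abs_le.mp (h x)).2
  have hlo := e'.map_mono_of_map_nonneg hpos (f := (-c) • wt V hV) (g := f)
    fun x => by simpa using (abs_le.mp (h x)).1
  rw [map_smul, smul_eq_mul] at hup hlo
  exact abs_le.mpr ⟨by linarith, hup⟩

variable [MeasurableSpace X] {π : Measure X}

lemma integral_sum_mul_indicator [IsFiniteMeasure π] (hV : ∀ x, 1 ≤ V x) (e' : BV V →ₗ[ℝ] ℝ)
    (hpos : ∀ f : BV V, (∀ x, 0 ≤ (f : X → ℝ) x) → 0 ≤ e' f)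
    (hπ : ∀ A : Set X, MeasurableSet A → π A = ENNReal.ofReal (e' (ind V hV A)))
    {ι : Type*} (s : Finset ι) (c : ι → ℝ) {A : ι → Set X} (hA : ∀ k, MeasurableSet (A k)) :
    ∫ x, ∑ k ∈ s, c k * (A k).indicator 1 x ∂π = e' (∑ k ∈ s, c k • ind V hV (A k)) := by
  rw [integral_finsetSum _ fun k _ => ((integrable_const 1).indicator (hA k)).const_mul _,
    map_sum]
  refine Finset.sum_congr rfl fun k _ => ?_
  have hind : 0 ≤ e' (ind V hV (A k)) := hpos _ fun x => by
    simp only [coe_ind]; exact indicator_nonneg (fun _ _ => zero_le_one) x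
  rw [integral_const_mul, integral_indicator_one (hA k), measureReal_def, hπ _ (hA k),
    ENNReal.toReal_ofReal hind, map_smul, smul_eq_mul]

lemma integral_eq_of_bounded [IsProbabilityMeasure π] (hV : ∀ x, 1 ≤ V x) (e' : BV V →ₗ[ℝ] ℝ)
    (hpos : ∀ f : BV V, (∀ x, 0 ≤ (f : X → ℝ) x) → 0 ≤ e' f)
    (hπ : ∀ A : Set X, MeasurableSet A → π A = ENNReal.ofReal (e' (ind V hV A)))
    {f : BV V} (hf : Measurable (f : X → ℝ)) {C : ℝ} (hC : ∀ x, |(f : X → ℝ) x| ≤ C) :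
    ∫ x, (f : X → ℝ) x ∂π = e' f := by
  have hfi : Integrable (f : X → ℝ) π :=
    Integrable.of_bound hf.aestronglyMeasurable C (ae_of_all _ hC)
  refine eq_of_forall_abs_sub_le_mul (K := 1 + e' (wt V hV)) fun ε hε => ?_
  obtain ⟨s, c, A, hA, hfg⟩ := exists_sum_indicator_approx hf hC hε
  set g : BV V := ∑ k ∈ s, c k • ind V hV (A k)
  have hg : (g : X → ℝ) = fun x => ∑ k ∈ s, c k * (A k).indicator 1 x := by
    ext x; simp [g]
  have hgi : Integrable (g : X → ℝ) π := by
    rw [hg]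
    exact integrable_finsetSum _ fun k _ => ((integrable_const 1).indicator (hA k)).const_mul _
  have hint : |∫ x, (f : X → ℝ) x ∂π - ∫ x, (g : X → ℝ) x ∂π| ≤ ε := by
    rw [← integral_sub hfi hgi]
    simpa using norm_integral_le_of_norm_le_const (μ := π)
      (ae_of_all _ fun x => (by simpa [hg] using hfg x : ‖(f : X → ℝ) x - (g : X → ℝ) x‖ ≤ ε))
  have hfun : |e' f - e' g| ≤ ε * e' (wt V hV) := by
    rw [← map_sub]
    exact abs_map_le hV e' hpos fun x => by
      simpa [hg] using (hfg x).trans (le_mul_of_one_le_right hε.le (hV x))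
  have hgint : ∫ x, (g : X → ℝ) x ∂π = e' g := by
    rw [hg]; exact integral_sum_mul_indicator hV e' hpos hπ s c hA
  calc |∫ x, (f : X → ℝ) x ∂π - e' f|
      = |(∫ x, (f : X → ℝ) x ∂π - ∫ x, (g : X → ℝ) x ∂π) - (e' f - e' g)| := by
        rw [hgint]; ring_nf
    _ ≤ ε + ε * e' (wt V hV) := (abs_sub _ _).trans (add_le_add hint hfun)
    _ = ε * (1 + e' (wt V hV)) := by ring

end BV

/-- let `e'` be a positive linear functional on `B_V` and `π` the probability
measure `π(A) = e'(1_A)`. Then `π` and `e'` coincide on bounded measurable functions,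
`π(V) ≤ e'(V) < ∞`, and `f ↦ π(f)` is a `V`-bounded (hence continuous) functional on `B_V`. -/
theorem stmt7 {X : Type*} [MeasurableSpace X] (V : X → ℝ) (hVm : Measurable V)
    (hV : ∀ x, 1 ≤ V x) (e' : BV V →ₗ[ℝ] ℝ)
    (hpos : ∀ f : BV V, (∀ x, 0 ≤ (f : X → ℝ) x) → 0 ≤ e' f)
    (π : Measure X) [IsProbabilityMeasure π]
    (hπ : ∀ A : Set X, MeasurableSet A → π A = ENNReal.ofReal (e' (BV.ind V hV A))) :
    (∀ f : BV V, Measurable (f : X → ℝ) → (∃ C : ℝ, ∀ x, |(f : X → ℝ) x| ≤ C) →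
        ∫ x, (f : X → ℝ) x ∂π = e' f) ∧
      (∫⁻ x, ENNReal.ofReal (V x) ∂π) ≤ ENNReal.ofReal (e' (BV.wt V hV)) ∧
      (∀ f : BV V, Measurable (f : X → ℝ) → (∀ x, |(f : X → ℝ) x| ≤ V x) →
        |∫ x, (f : X → ℝ) x ∂π| ≤ e' (BV.wt V hV)) := by
  have hV0 : ∀ x, 0 ≤ V x := fun x => zero_le_one.trans (hV x)
  have hlint : ∫⁻ x, ENNReal.ofReal (V x) ∂π ≤ ENNReal.ofReal (e' (BV.wt V hV)) := by
    refine lintegral_ofReal_le_of_integral_min_le hVm hV0 fun n => ?_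
    have hmin := BV.integral_eq_of_bounded hV e' hpos hπ (f := BV.wtMin hV n)
      (hVm.min measurable_const) (C := n) fun x => by
        simp [abs_of_nonneg (le_min (hV0 x) n.cast_nonneg)]
    simp only [BV.coe_wtMin] at hmin
    rw [hmin]
    exact e'.map_mono_of_map_nonneg hpos fun x => min_le_left _ _
  refine ⟨fun f hf ⟨C, hC⟩ => BV.integral_eq_of_bounded hV e' hpos hπ hf hC, hlint,
    fun f _ hfV => ?_⟩
  have hVi : Integrable V π := ⟨hVm.aestronglyMeasurable,
    (hasFiniteIntegral_iff_ofReal (ae_of_all _ hV0)).mpr (hlint.trans_lt ENNReal.ofReal_lt_top)⟩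
  calc |∫ x, (f : X → ℝ) x ∂π| ≤ ∫ x, V x ∂π :=
        norm_integral_le_of_norm_le (f := (f : X → ℝ)) hVi (ae_of_all _ hfV)
    _ ≤ e' (BV.wt V hV) := by
        rw [integral_eq_lintegral_of_nonneg_ae (ae_of_all _ hV0) hVm.aestronglyMeasurable]
        exact ENNReal.toReal_le_of_le_ofReal (hpos _ hV0) hlint
end

section
/- Let ν ∈ L¹(ℝ) be a probability density, α₀ ∈ (-1,1), V(x) = 1 + |x|, and define Markov kernels P_α f(x) = ∫_ℝ f(y) ν(y − αx) dy. Then ‖P_α − P_{α₀}‖_{0,1} := sup_{‖f‖_∞ ≤ 1} sup_x |P_α f(x) − P_{α₀} f(x)|/V(x) → 0 as α → α₀. -/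
/-! For `|f| ≤ 1`, `|P_α f(x) - P_{α₀} f(x)|` is at most the `L¹` distance between `ν` and its
translate by `(α - α₀) x`. By continuity of translation in `L¹` this distance is small when
`(α - α₀) x` is, and it never exceeds `2 ‖ν‖₁`; so it is `≤ ε (1 + |x|)` uniformly in `x` once
`α` is close to `α₀`: bounded `x` are handled by continuity, large `|x|` by the weight. -/

open MeasureTheory Filter Topology ENNReal

/-- The AR(1) transition operator `P_α f (x) = ∫ f(y) ν(y - αx) dy`. -/
noncomputable def arOp (ν : ℝ → ℝ) (α : ℝ) (f : ℝ → ℝ) (x : ℝ) : ℝ :=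
  ∫ y, f y * ν (y - α * x)

/-- The operator "norm" `‖P_α - P_{α₀}‖_{0,1} = sup_{‖f‖_0 ≤ 1} sup_x |P_α f(x) - P_{α₀} f(x)| / (1+|x|)`,
valued in `ℝ≥0∞`. -/
noncomputable def arDiffNorm01 (ν : ℝ → ℝ) (α α₀ : ℝ) : ℝ≥0∞ :=
  ⨆ f : {f : ℝ → ℝ // Measurable f ∧ ∀ y, |f y| ≤ 1}, ⨆ x : ℝ,
    ENNReal.ofReal (|arOp ν α f.1 x - arOp ν α₀ f.1 x| / (1 + |x|))

section Translation

variable {G E : Type*} [AddGroup G] [MeasurableSpace G] [MeasurableAdd G] {μ : Measure G}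
  [μ.IsAddRightInvariant] [NormedAddCommGroup E]

theorem MeasureTheory.Integrable.integral_norm_comp_sub_sub_le {f : G → E} (hf : Integrable f μ)
    (s : G) : ∫ y, ‖f (y - s) - f y‖ ∂μ ≤ 2 * ∫ y, ‖f y‖ ∂μ := by
  have hfs : Integrable (fun y => f (y - s)) μ := hf.comp_sub_right s
  calc ∫ y, ‖f (y - s) - f y‖ ∂μ ≤ ∫ y, (‖f (y - s)‖ + ‖f y‖) ∂μ :=
        integral_mono (hfs.sub hf).norm (hfs.norm.add hf.norm) fun y => norm_sub_le _ _
    _ = 2 * ∫ y, ‖f y‖ ∂μ := by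
        rw [integral_add hfs.norm hf.norm, integral_sub_right_eq_self (fun y => ‖f y‖) s]
        ring

theorem MeasureTheory.Integrable.tendsto_integral_norm_comp_sub_sub [TopologicalSpace G]
    [IsTopologicalAddGroup G] [R1Space G] [BorelSpace G] [IsLocallyFiniteMeasure μ]
    [μ.InnerRegularCompactLTTop] {f : G → E} (hf : Integrable f μ) :
    Tendsto (fun s => ∫ y, ‖f (y - s) - f y‖ ∂μ) (𝓝 0) (𝓝 0) := by
  let shift : C(G, C(G, G)) := ContinuousMap.curry ⟨fun p : G × G => p.2 - p.1, by fun_prop⟩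
  have hshift (s : G) : MeasurePreserving (shift s) μ μ := measurePreserving_sub_right μ s
  let F : G → Lp E 1 μ := fun s => Lp.compMeasurePreserving (shift s) (hshift s) (hf.toL1 f)
  have hF : Tendsto F (𝓝 0) (𝓝 (F 0)) :=
    tendsto_const_nhds.compMeasurePreservingLp (shift.continuous.tendsto 0) _ _ one_ne_top
  have hdist (s : G) : dist (F s) (F 0) = ∫ y, ‖f (y - s) - f y‖ ∂μ := by
    rw [L1.dist_eq_integral_dist]
    refine integral_congr_ae ?_
    filter_upwards [((memLp_one_iff_integrable.2 hf).comp_measurePreserving (hshift s)).coeFn_toLp,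
      ((memLp_one_iff_integrable.2 hf).comp_measurePreserving (hshift 0)).coeFn_toLp] with y hs h0
    simp only [F, Integrable.toL1, Lp.toLp_compMeasurePreserving, hs, h0]
    simp [shift, dist_eq_norm]
  simpa only [← hdist] using tendsto_iff_dist_tendsto_zero.1 hF

end Translation

theorem abs_arOp_sub_arOp_le {ν : ℝ → ℝ} (hν : Integrable ν) {f : ℝ → ℝ} (hf : Measurable f)
    (hf_le : ∀ y, |f y| ≤ 1) (α α₀ x : ℝ) :
    |arOp ν α f x - arOp ν α₀ f x| ≤ ∫ y, ‖ν (y - (α - α₀) * x) - ν y‖ := by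
  have hf_bdd : ∀ᵐ y, ‖f y‖ ≤ 1 := ae_of_all _ hf_le
  have hν_shift (a : ℝ) : Integrable (fun y => f y * ν (y - a)) :=
    (hν.comp_sub_right a).bdd_mul hf.aestronglyMeasurable hf_bdd
  rw [arOp, arOp, ← integral_sub (hν_shift _) (hν_shift _)]
  calc ‖∫ y, (f y * ν (y - α * x) - f y * ν (y - α₀ * x))‖
      ≤ ∫ y, ‖ν (y - α * x) - ν (y - α₀ * x)‖ := by
        refine norm_integral_le_of_norm_le
          ((hν.comp_sub_right _).sub (hν.comp_sub_right _)).norm (ae_of_all _ fun y => ?_)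
        rw [← mul_sub, norm_mul]
        exact mul_le_of_le_one_left (norm_nonneg _) (hf_le y)
    _ = ∫ y, ‖ν (y - (α - α₀) * x) - ν y‖ := by
        rw [← integral_sub_right_eq_self (fun y => ‖ν (y - (α - α₀) * x) - ν y‖) (α₀ * x)]
        congr! 5
        ring

theorem arDiffNorm01_le_ofReal {ν : ℝ → ℝ} (hν : Integrable ν) {α α₀ e : ℝ}
    (h : ∀ x, ∫ y, ‖ν (y - (α - α₀) * x) - ν y‖ ≤ e * (1 + |x|)) :
    arDiffNorm01 ν α α₀ ≤ ENNReal.ofReal e := by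
  refine iSup₂_le fun f x => ENNReal.ofReal_le_ofReal ?_
  rw [div_le_iff₀ (by positivity)]
  exact (abs_arOp_sub_arOp_le hν f.2.1 f.2.2 α α₀ x).trans (h x)

theorem eventually_forall_le_mul_one_add_abs {h : ℝ → ℝ} (hh : Tendsto h (𝓝 0) (𝓝 0)) {C : ℝ}
    (hC : ∀ s, h s ≤ C) {e : ℝ} (he : 0 < e) :
    ∀ᶠ t in 𝓝 0, ∀ x, h (t * x) ≤ e * (1 + |x|) := by
  obtain ⟨δ, hδ, hδh⟩ := Metric.eventually_nhds_iff.1 (hh.eventually (gt_mem_nhds he))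
  set R := |C| / e
  have hsmall : ∀ᶠ t : ℝ in 𝓝 0, |t| * R < δ :=
    (continuous_abs.mul continuous_const).tendsto' 0 0 (by simp) |>.eventually (gt_mem_nhds hδ)
  filter_upwards [hsmall] with t ht x
  rcases le_or_gt |x| R with hx | hx
  · have htx : dist (t * x) 0 < δ := by
      rw [dist_zero_right, Real.norm_eq_abs, abs_mul]
      exact lt_of_le_of_lt (by gcongr) ht
    calc h (t * x) ≤ e := (hδh htx).le
      _ ≤ e * (1 + |x|) := le_mul_of_one_le_right he.le (by linarith [abs_nonneg x])
  · calc h (t * x) ≤ C := hC _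
      _ ≤ e * R := by rw [mul_div_cancel₀ _ he.ne']; exact le_abs_self C
      _ ≤ e * (1 + |x|) := by gcongr; linarith

theorem stmt9_general (ν : ℝ → ℝ) (hint : Integrable ν) (α₀ : ℝ) :
    Tendsto (fun α : ℝ => arDiffNorm01 ν α α₀) (𝓝 α₀) (𝓝 0) := by
  rw [ENNReal.tendsto_nhds_zero]
  intro ε hε
  obtain ⟨e, -, he, heε⟩ := ENNReal.lt_iff_exists_real_btwn.1 hε
  have hsmall := eventually_forall_le_mul_one_add_abs hint.tendsto_integral_norm_comp_sub_sub
    hint.integral_norm_comp_sub_sub_le (ENNReal.ofReal_pos.1 he)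
  filter_upwards [tendsto_sub_nhds_zero_iff.2 tendsto_id |>.eventually hsmall] with α hα
  exact (arDiffNorm01_le_ofReal hint hα).trans heε.le

/-- for any probability density `ν` and any `α₀ ∈ (-1,1)`, the AR(1) kernels
satisfy the weak continuity condition `‖P_α - P_{α₀}‖_{0,1} → 0` as `α → α₀`. -/
theorem stmt9 (ν : ℝ → ℝ) (hpos : ∀ x, 0 ≤ ν x) (hint : Integrable ν)
    (hmass : ∫ x, ν x = 1) (α₀ : ℝ) (hα₀ : α₀ ∈ Set.Ioo (-1 : ℝ) 1) :
    Tendsto (fun α : ℝ => arDiffNorm01 ν α α₀) (𝓝 α₀) (𝓝 0) :=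
  stmt9_general ν hint α₀
end

section
/- Let ν be a probability density on ℝ with ∫|x|ν(x)dx < ∞, V(x) = 1+|x|, and P_α f(x) = ∫ f(y)ν(y − αx)dy. Fix α₀ ∈ (0,1) and a > 0 with J₀ := ∫_{-a}^a ν − ∫_{-2a}^{-a} ν − ∫_a^{2a} ν ≠ 0. For α ∈ (α₀,1) set x_α = a/(α−α₀) and f_α(y) = y·1_{[a+α₀x_α, a+αx_α]}(y) − y·1_{[−a+α₀x_α, −a+αx_α]}(y). Then lim_{α↓α₀} [(P_α f_α)(x_α) − (P_{α₀} f_α)(x_α)]/V(x_α) = α₀·J₀ ≠ 0; consequently ‖P_α − P_{α₀}‖_{B_V} does not tend to 0 as α ↓ α₀. -/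
/-!
Substituting `z = y - c` turns `∫ y·1_{[p,q]}(y) ν(y - c) dy` into `∫_{p-c}^{q-c} (z + c) ν(z) dz`.
Since `α x_α - α₀ x_α = a`, the intervals produced for `P_α f_α (x_α)` (`[0,a]`, `[-2a,-a]`) and
for `P_{α₀} f_α (x_α)` (`[a,2a]`, `[-a,0]`) do not depend on `α`, so the difference is an affine
function `K + α₀ J₀ x_α` of `x_α`. Dividing by `V(x_α) = 1 + x_α → ∞` leaves `α₀ J₀`, and since
`|f_α(y)| ≤ |y| ≤ V(y)` these ratios bound `‖P_α - P_{α₀}‖_{B_V}` from below.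
-/

open MeasureTheory Filter Topology Set ENNReal

/-- The operator "norm" `‖P_α - P_{α₀}‖_{B_V}` for `V(x) = 1 + |x|`, valued in `ℝ≥0∞`:
`sup_{|f| ≤ V} sup_x |P_α f(x) - P_{α₀} f(x)| / V(x)`. -/
noncomputable def arDiffNormV (ν : ℝ → ℝ) (α α₀ : ℝ) : ℝ≥0∞ :=
  ⨆ f : {f : ℝ → ℝ // Measurable f ∧ ∀ y, |f y| ≤ 1 + |y|}, ⨆ x : ℝ,
    ENNReal.ofReal (|arOp ν α f.1 x - arOp ν α₀ f.1 x| / (1 + |x|))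

noncomputable def arTestFun (a s t y : ℝ) : ℝ :=
  y * (Icc (a + s) (a + t)).indicator (fun _ => (1 : ℝ)) y -
    y * (Icc (-a + s) (-a + t)).indicator (fun _ => (1 : ℝ)) y

theorem measurable_arTestFun (a s t : ℝ) : Measurable (arTestFun a s t) :=
  (measurable_id.mul (measurable_const.indicator measurableSet_Icc)).sub
    (measurable_id.mul (measurable_const.indicator measurableSet_Icc))

theorem abs_arTestFun_le {a s t : ℝ} (hst : t - s < 2 * a) (y : ℝ) :
    |arTestFun a s t y| ≤ |y| := by
  unfold arTestFun
  by_cases h₁ : y ∈ Icc (a + s) (a + t) <;> by_cases h₂ : y ∈ Icc (-a + s) (-a + t)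
  · exact absurd (h₁.1.trans h₂.2) (by linarith)
  all_goals simp [h₁, h₂]

section

variable {ν : ℝ → ℝ}

theorem mul_indicator_Icc_mul_comp_sub_eq (c p q : ℝ) :
    (fun y => y * (Icc p q).indicator (fun _ => (1 : ℝ)) y * ν (y - c)) =
      (Icc p q).indicator (fun y => y * ν (y - c)) := by
  ext y
  by_cases hy : y ∈ Icc p q <;> simp [hy]

theorem integral_mul_indicator_Icc_mul_comp_sub (c : ℝ) {p q : ℝ} (hpq : p ≤ q) :
    ∫ y, y * (Icc p q).indicator (fun _ => (1 : ℝ)) y * ν (y - c) =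
      ∫ z in (p - c)..(q - c), (z + c) * ν z := by
  rw [mul_indicator_Icc_mul_comp_sub_eq, integral_indicator measurableSet_Icc,
    integral_Icc_eq_integral_Ioc, ← intervalIntegral.integral_of_le hpq,
    ← intervalIntegral.integral_comp_sub_right (fun z => (z + c) * ν z)]
  simp

theorem integrable_mul_indicator_Icc_mul_comp_sub (hν : Integrable ν) (c p q : ℝ) :
    Integrable (fun y => y * (Icc p q).indicator (fun _ => (1 : ℝ)) y * ν (y - c)) := by
  rw [mul_indicator_Icc_mul_comp_sub_eq, integrable_indicator_iff measurableSet_Icc]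
  exact (hν.comp_sub_right c).integrableOn.continuousOn_mul continuousOn_id isCompact_Icc

theorem intervalIntegral_add_mul (hν : Integrable ν) (c p q : ℝ) :
    ∫ z in p..q, (z + c) * ν z = (∫ z in p..q, z * ν z) + c * ∫ z in p..q, ν z := by
  simp_rw [add_mul]
  rw [intervalIntegral.integral_add
    (hν.intervalIntegrable.continuousOn_mul (g := fun z => z) continuousOn_id)
    (hν.intervalIntegrable.const_mul c), intervalIntegral.integral_const_mul]

theorem integral_arTestFun_mul_comp_sub (hν : Integrable ν) {a s t : ℝ} (hst : s ≤ t) (c : ℝ) :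
    ∫ y, arTestFun a s t y * ν (y - c) =
      (∫ z in (a + s - c)..(a + t - c), (z + c) * ν z) -
        ∫ z in (-a + s - c)..(-a + t - c), (z + c) * ν z := by
  simp_rw [arTestFun, sub_mul]
  rw [integral_sub (integrable_mul_indicator_Icc_mul_comp_sub hν _ _ _)
      (integrable_mul_indicator_Icc_mul_comp_sub hν _ _ _),
    integral_mul_indicator_Icc_mul_comp_sub c (by linarith),
    integral_mul_indicator_Icc_mul_comp_sub c (by linarith)]

theorem exists_arOp_arTestFun_sub_eq (hν : Integrable ν) {a : ℝ} (ha : 0 ≤ a) :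
    ∃ K, ∀ α α₀ x, (α - α₀) * x = a →
      arOp ν α (arTestFun a (α₀ * x) (α * x)) x - arOp ν α₀ (arTestFun a (α₀ * x) (α * x)) x =
        K + α₀ * ((∫ y in (-a)..a, ν y) - (∫ y in (-2 * a)..(-a), ν y) -
          ∫ y in a..(2 * a), ν y) * x := by
  have hN : (∫ z in (-a)..0, ν z) + (∫ z in 0..a, ν z) = ∫ z in (-a)..a, ν z :=
    intervalIntegral.integral_add_adjacent_intervals hν.intervalIntegrable hν.intervalIntegrable
  refine ⟨(∫ z in 0..a, z * ν z) - (∫ z in (-2 * a)..(-a), z * ν z) - (∫ z in a..(2 * a), z * ν z)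
      + (∫ z in (-a)..0, z * ν z) + a * ((∫ z in 0..a, ν z) - ∫ z in (-2 * a)..(-a), ν z),
    fun α α₀ x hx => ?_⟩
  have ht : α * x = α₀ * x + a := by linarith
  simp only [arOp]
  rw [ht, integral_arTestFun_mul_comp_sub hν (by linarith),
    integral_arTestFun_mul_comp_sub hν (by linarith), mul_right_comm α₀]
  generalize α₀ * x = s
  rw [show a + s - (s + a) = 0 by ring, show a + (s + a) - (s + a) = a by ring,
    show -a + s - (s + a) = -2 * a by ring, show -a + (s + a) - (s + a) = -a by ring,
    show a + s - s = a by ring, show a + (s + a) - s = 2 * a by ring,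
    show -a + s - s = -a by ring, show -a + (s + a) - s = 0 by ring]
  simp only [intervalIntegral_add_mul hν]
  linear_combination s * hN

end

theorem tendsto_add_mul_div_one_add_abs {ι : Type*} {l : Filter ι} {x : ι → ℝ}
    (hx : Tendsto x l atTop) (K L : ℝ) :
    Tendsto (fun i => (K + L * x i) / (1 + |x i|)) l (𝓝 L) := by
  have hlim : Tendsto (fun i => L + (K - L) * (1 + x i)⁻¹) l (𝓝 L) := by
    simpa using tendsto_const_nhds.add
      ((tendsto_inv_atTop_zero.comp (tendsto_atTop_add_const_left _ 1 hx)).const_mul (K - L))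
  refine hlim.congr' ?_
  filter_upwards [hx.eventually_ge_atTop 0] with i hi
  rw [abs_of_nonneg hi]
  field_simp
  ring

theorem tendsto_div_sub_nhdsGT_atTop {a : ℝ} (ha : 0 < a) (α₀ : ℝ) :
    Tendsto (fun α => a / (α - α₀)) (𝓝[>] α₀) atTop := by
  have h : Tendsto (fun α => α - α₀) (𝓝[>] α₀) (𝓝[>] 0) :=
    tendsto_nhdsWithin_iff.2
      ⟨((continuous_sub_right α₀).tendsto' α₀ 0 (sub_self α₀)).mono_left nhdsWithin_le_nhds,
        eventually_nhdsWithin_of_forall fun α hα => mem_Ioi.2 (sub_pos.2 hα)⟩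
  simpa [div_eq_mul_inv] using (tendsto_inv_nhdsGT_zero.comp h).const_mul_atTop ha

theorem ofReal_le_arDiffNormV {ν f : ℝ → ℝ} (hf : Measurable f) (hfV : ∀ y, |f y| ≤ 1 + |y|)
    (α α₀ x : ℝ) :
    ENNReal.ofReal (|arOp ν α f x - arOp ν α₀ f x| / (1 + |x|)) ≤ arDiffNormV ν α α₀ :=
  le_iSup₂_of_le (f := fun (g : {f : ℝ → ℝ // Measurable f ∧ ∀ y, |f y| ≤ 1 + |y|}) x =>
    ENNReal.ofReal (|arOp ν α g.1 x - arOp ν α₀ g.1 x| / (1 + |x|))) ⟨f, hf, hfV⟩ x le_rfl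

theorem not_tendsto_zero_of_ofReal_abs_le {ι : Type*} {l : Filter ι} [l.NeBot] {g : ι → ℝ}
    {N : ι → ℝ≥0∞} {L : ℝ} (hg : Tendsto g l (𝓝 L)) (hL : L ≠ 0)
    (hN : ∀ᶠ i in l, ENNReal.ofReal |g i| ≤ N i) : ¬ Tendsto N l (𝓝 0) := by
  intro hN0
  have h0 : Tendsto (fun i => ENNReal.ofReal |g i|) l (𝓝 0) :=
    tendsto_of_tendsto_of_tendsto_of_le_of_le' tendsto_const_nhds hN0
      (Eventually.of_forall fun _ => zero_le) hN
  have hL' : Tendsto (fun i => ENNReal.ofReal |g i|) l (𝓝 (ENNReal.ofReal |L|)) :=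
    (ENNReal.continuous_ofReal.tendsto _).comp hg.abs
  have := ENNReal.ofReal_eq_zero.1 (tendsto_nhds_unique hL' h0)
  exact hL (abs_nonpos_iff.1 this)

theorem stmt10_general (ν : ℝ → ℝ) (hint : Integrable ν)
    (α₀ : ℝ) (hα₀ : α₀ ∈ Set.Ioo (0 : ℝ) 1) (a : ℝ) (ha : 0 < a)
    (J₀ : ℝ)
    (hJ₀ : J₀ = (∫ y in (-a)..a, ν y) - (∫ y in (-2*a)..(-a), ν y) - ∫ y in a..(2*a), ν y)
    (hJ₀ne : J₀ ≠ 0)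
    (xα : ℝ → ℝ) (hxα : ∀ α, xα α = a / (α - α₀))
    (fα : ℝ → ℝ → ℝ)
    (hfα : ∀ α y, fα α y =
      y * (Icc (a + α₀ * xα α) (a + α * xα α)).indicator (fun _ => (1:ℝ)) y -
      y * (Icc (-a + α₀ * xα α) (-a + α * xα α)).indicator (fun _ => (1:ℝ)) y) :
    Tendsto (fun α => (arOp ν α (fα α) (xα α) - arOp ν α₀ (fα α) (xα α)) / (1 + |xα α|))
        (𝓝[>] α₀) (𝓝 (α₀ * J₀)) ∧
      α₀ * J₀ ≠ 0 ∧
      ¬ Tendsto (fun α => arDiffNormV ν α α₀) (𝓝[>] α₀) (𝓝 0) := by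
  obtain ⟨K, hK⟩ := exists_arOp_arTestFun_sub_eq hint ha.le
  have hf : ∀ α, fα α = arTestFun a (α₀ * xα α) (α * xα α) := fun α => funext (hfα α)
  have hshift : ∀ α, α₀ < α → (α - α₀) * xα α = a := fun α hα => by
    rw [hxα]
    field_simp [(sub_pos.2 hα).ne']
  have hx : Tendsto xα (𝓝[>] α₀) atTop := by
    rw [show xα = _ from funext hxα]
    exact tendsto_div_sub_nhdsGT_atTop ha α₀
  have hlim : Tendsto (fun α => (arOp ν α (fα α) (xα α) - arOp ν α₀ (fα α) (xα α)) /
      (1 + |xα α|)) (𝓝[>] α₀) (𝓝 (α₀ * J₀)) := by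
    refine (tendsto_add_mul_div_one_add_abs hx K (α₀ * J₀)).congr' ?_
    filter_upwards [self_mem_nhdsWithin] with α hα
    rw [hf, hK α α₀ _ (hshift α hα), hJ₀]
  have hne : α₀ * J₀ ≠ 0 := mul_ne_zero hα₀.1.ne' hJ₀ne
  refine ⟨hlim, hne, not_tendsto_zero_of_ofReal_abs_le hlim hne ?_⟩
  filter_upwards [self_mem_nhdsWithin] with α hα
  rw [abs_div, abs_of_pos (by positivity : (0 : ℝ) < 1 + |xα α|), hf]
  refine ofReal_le_arDiffNormV (measurable_arTestFun _ _ _) (fun y => ?_) _ _ _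
  have hst : α * xα α - α₀ * xα α < 2 * a := by linarith [hshift α hα]
  exact (abs_arTestFun_le hst y).trans (le_add_of_nonneg_left zero_le_one)

/-- with `x_α = a/(α-α₀)` and the test functions `f_α`, the normalized
difference `[(P_α f_α)(x_α) - (P_{α₀} f_α)(x_α)]/V(x_α)` tends to `α₀·J₀ ≠ 0` as `α ↓ α₀`;
consequently `‖P_α - P_{α₀}‖_{B_V}` does not tend to `0` as `α ↓ α₀`. -/
theorem stmt10 (ν : ℝ → ℝ) (hpos : ∀ x, 0 ≤ ν x) (hint : Integrable ν)
    (hmass : ∫ x, ν x = 1) (hmom : Integrable (fun x => |x| * ν x))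
    (α₀ : ℝ) (hα₀ : α₀ ∈ Set.Ioo (0 : ℝ) 1) (a : ℝ) (ha : 0 < a)
    (J₀ : ℝ)
    (hJ₀ : J₀ = (∫ y in (-a)..a, ν y) - (∫ y in (-2*a)..(-a), ν y) - ∫ y in a..(2*a), ν y)
    (hJ₀ne : J₀ ≠ 0)
    (xα : ℝ → ℝ) (hxα : ∀ α, xα α = a / (α - α₀))
    (fα : ℝ → ℝ → ℝ)
    (hfα : ∀ α y, fα α y =
      y * (Icc (a + α₀ * xα α) (a + α * xα α)).indicator (fun _ => (1:ℝ)) y -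
      y * (Icc (-a + α₀ * xα α) (-a + α * xα α)).indicator (fun _ => (1:ℝ)) y) :
    Tendsto (fun α => (arOp ν α (fα α) (xα α) - arOp ν α₀ (fα α) (xα α)) / (1 + |xα α|))
        (𝓝[>] α₀) (𝓝 (α₀ * J₀)) ∧
      α₀ * J₀ ≠ 0 ∧
      ¬ Tendsto (fun α => arDiffNormV ν α α₀) (𝓝[>] α₀) (𝓝 0) :=
  stmt10_general ν hint α₀ hα₀ a ha J₀ hJ₀ hJ₀ne xα hxα fα hfα
end

section
/- Let P be a Markov kernel and V ≥ 1 with P^N V ≤ δ^N V + L·1_X. Then for every β ∈ (0,1], P^N V^β ≤ δ^{Nβ} V^β + L^β·1_X. In particular the drift condition (D) with respect to V implies the drift condition with respect to V^β (with constant δ^β ∈ (0,1)). -/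
open MeasureTheory ProbabilityTheory ENNReal

instance isMarkovKernel_kpow {X : Type*} [MeasurableSpace X] (P : Kernel X X)
    [IsMarkovKernel P] (n : ℕ) : IsMarkovKernel (kpow P n) := by
  induction n with
  | zero => exact inferInstanceAs (IsMarkovKernel Kernel.id)
  | succ n ih => exact inferInstanceAs (IsMarkovKernel (P ∘ₖ kpow P n))

/-- Jensen for the concave map `t ↦ t ^ p`, read off from the monotonicity in `p` of `L^p`
norms on a probability space. -/
theorem ENNReal.lintegral_rpow_le_rpow_lintegral {α : Type*} [MeasurableSpace α]
    {μ : Measure α} [IsProbabilityMeasure μ] {f : α → ℝ≥0∞} (hf : AEMeasurable f μ) {p : ℝ}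
    (hp0 : 0 < p) (hp1 : p ≤ 1) : ∫⁻ a, f a ^ p ∂μ ≤ (∫⁻ a, f a ∂μ) ^ p := by
  have h := eLpNorm'_le_eLpNorm'_of_exponent_le hp0 hp1 μ hf.aestronglyMeasurable
  simp only [eLpNorm', enorm_eq_self, rpow_one, div_one, one_div] at h
  exact (ENNReal.rpow_inv_le_iff hp0).1 h

theorem Real.mul_add_rpow_le {a b c p : ℝ} (ha : 0 ≤ a) (hb : 0 ≤ b) (hc : 0 ≤ c)
    (hp0 : 0 ≤ p) (hp1 : p ≤ 1) : (a * b + c) ^ p ≤ a ^ p * b ^ p + c ^ p := by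
  rw [← Real.mul_rpow ha hb]
  exact Real.rpow_add_le_add_rpow (mul_nonneg ha hb) hc hp0 hp1

theorem stmt12_general {X : Type*} [MeasurableSpace X] (P : Kernel X X) [IsMarkovKernel P]
    (V : X → ℝ) (hVm : Measurable V) (hV : ∀ x, 1 ≤ V x)
    (N : ℕ) (δ L : ℝ) (hδ : δ ∈ Set.Ioo (0 : ℝ) 1) (hL : 0 < L)
    (hdrift : ∀ x, ∫⁻ y, ENNReal.ofReal (V y) ∂(kpow P N x)
      ≤ ENNReal.ofReal (δ ^ N * V x + L)) :
    ∀ β ∈ Set.Ioc (0 : ℝ) 1, ∀ x,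
      ∫⁻ y, ENNReal.ofReal (V y ^ β) ∂(kpow P N x)
        ≤ ENNReal.ofReal (δ ^ ((N : ℝ) * β) * V x ^ β + L ^ β) := by
  rintro β ⟨hβ0, hβ1⟩ x
  have hV0 (y : X) : 0 ≤ V y := zero_le_one.trans (hV y)
  have hδN : 0 ≤ δ ^ N := pow_nonneg hδ.1.le N
  calc ∫⁻ y, ENNReal.ofReal (V y ^ β) ∂(kpow P N x)
      = ∫⁻ y, ENNReal.ofReal (V y) ^ β ∂(kpow P N x) := by
        simp_rw [ofReal_rpow_of_nonneg (hV0 _) hβ0.le]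
    _ ≤ (∫⁻ y, ENNReal.ofReal (V y) ∂(kpow P N x)) ^ β :=
        lintegral_rpow_le_rpow_lintegral hVm.ennreal_ofReal.aemeasurable hβ0 hβ1
    _ ≤ ENNReal.ofReal (δ ^ N * V x + L) ^ β := rpow_le_rpow (hdrift x) hβ0.le
    _ = ENNReal.ofReal ((δ ^ N * V x + L) ^ β) :=
        ofReal_rpow_of_nonneg (add_nonneg (mul_nonneg hδN (hV0 x)) hL.le) hβ0.le
    _ ≤ ENNReal.ofReal ((δ ^ N) ^ β * V x ^ β + L ^ β) :=
        ofReal_le_ofReal (Real.mul_add_rpow_le hδN (hV0 x) hL.le hβ0.le hβ1)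
    _ = ENNReal.ofReal (δ ^ ((N : ℝ) * β) * V x ^ β + L ^ β) := by
        rw [Real.rpow_natCast_mul hδ.1.le]

/-- the drift condition `P^N V ≤ δ^N V + L 1_X` implies, for every
`β ∈ (0,1]`, the drift condition `P^N V^β ≤ δ^{Nβ} V^β + L^β 1_X` (Jensen's inequality). -/
theorem stmt12 {X : Type*} [MeasurableSpace X] (P : Kernel X X) [IsMarkovKernel P]
    (V : X → ℝ) (hVm : Measurable V) (hV : ∀ x, 1 ≤ V x)
    (N : ℕ) (hN : 1 ≤ N) (δ L : ℝ) (hδ : δ ∈ Set.Ioo (0 : ℝ) 1) (hL : 0 < L)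
    (hdrift : ∀ x, ∫⁻ y, ENNReal.ofReal (V y) ∂(kpow P N x)
      ≤ ENNReal.ofReal (δ ^ N * V x + L)) :
    ∀ β ∈ Set.Ioc (0 : ℝ) 1, ∀ x,
      ∫⁻ y, ENNReal.ofReal (V y ^ β) ∂(kpow P N x)
        ≤ ENNReal.ofReal (δ ^ ((N : ℝ) * β) * V x ^ β + L ^ β) :=
  stmt12_general P V hVm hV N δ L hδ hL hdrift
end

section
/- Let ν be a positive probability density on ℝ, C¹ with A₁ := sup_t |ν'(t)|/ν(t) < ∞, r ≥ 1, V(x) = (1+|x|)^r, and define P_{k,α}f(x) = (−1)^k x^k ∫ f(y) ν^{(k)}(y − αx) dy. Then for every β ∈ [0,1], f with ‖f‖_β := sup |f|/V^β < ∞, every x ∈ ℝ and α, α' ∈ (−a₀, a₀): |(P_{0,α}f)(x) − (P_{0,α'}f)(x)| ≤ |α − α'| A₁ B ‖f‖_β V(x)^{β + 1/r}, where B is a constant with P_α V^β ≤ B V^β for all |α| ≤ a₀. -/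
open MeasureTheory Set

/-!
Differentiating `α ↦ ∫ f(y) ν(y - αx) dy` under the integral sign would need a dominating
function uniform in `α`; instead, integrate the derivative bound first. By the fundamental
theorem of calculus and `|ν'| ≤ A₁ ν`,
`|ν(y - αx) - ν(y - α'x)| ≤ ∫_{Ι α' α} |x| A₁ ν(y - sx) ds` for every `y`. Multiplying by
`|f(y)|`, integrating in `y` and exchanging the order of integration (Fubini), each inner
integral is `|x| A₁ ∫ |f| ν(· - sx) ≤ |x| A₁ F B V(x)^β`, and the outer one has length
`|α - α'|`. Finally `|x| ≤ V(x)^{1/r}`.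
-/

theorem abs_sub_le_integral_uIoc_of_abs_deriv_le {g h : ℝ → ℝ} (hg : Differentiable ℝ g)
    (hh : Continuous h) (hgh : ∀ s, |deriv g s| ≤ h s) (a b : ℝ) :
    |g b - g a| ≤ ∫ s in uIoc a b, h s := by
  have hint : IntervalIntegrable (deriv g) volume a b :=
    (hh.intervalIntegrable a b).mono_fun (measurable_deriv g).aestronglyMeasurable
      (Filter.Eventually.of_forall fun s => (hgh s).trans (le_abs_self _))
  rw [← intervalIntegral.integral_eq_sub_of_hasDerivAt (fun s _ => (hg s).hasDerivAt) hint,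
    ← Real.norm_eq_abs]
  refine intervalIntegral.norm_integral_le_integral_norm_uIoc.trans
    (setIntegral_mono_on ((intervalIntegrable_iff.mp hint).norm) ?_ measurableSet_uIoc
      fun s _ => hgh s)
  exact (hh.integrableOn_uIcc).mono_set uIoc_subset_uIcc

theorem abs_integral_le_of_le_integral_kernel {X Y : Type*} [MeasurableSpace X]
    [MeasurableSpace Y] {μ : Measure X} [IsFiniteMeasure μ] {ρ : Measure Y} [SFinite ρ]
    {G : X → Y → ℝ} (hG : AEStronglyMeasurable (Function.uncurry G) (μ.prod ρ))
    (hG0 : ∀ s y, 0 ≤ G s y) (hGint : ∀ᵐ s ∂μ, Integrable (G s) ρ) {C : ℝ}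
    (hGC : ∀ᵐ s ∂μ, ∫ y, G s y ∂ρ ≤ C) {F : Y → ℝ} (hF : ∀ y, |F y| ≤ ∫ s, G s y ∂μ) :
    |∫ y, F y ∂ρ| ≤ μ.real univ * C := by
  have hnorm : ∀ s, ∫ y, ‖G s y‖ ∂ρ = ∫ y, G s y ∂ρ := fun s =>
    integral_congr_ae (Filter.Eventually.of_forall fun y => Real.norm_of_nonneg (hG0 s y))
  have hprod : Integrable (Function.uncurry G) (μ.prod ρ) := by
    refine (integrable_prod_iff hG).mpr ⟨hGint, (integrable_const C).mono' ?_ ?_⟩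
    · exact hG.norm.integral_prod_right'
    · filter_upwards [hGC] with s hs
      simp only [Function.uncurry_apply_pair]
      rw [hnorm, Real.norm_of_nonneg (integral_nonneg (hG0 s))]
      exact hs
  calc |∫ y, F y ∂ρ| ≤ ∫ y, |F y| ∂ρ := by
        simpa only [Real.norm_eq_abs] using norm_integral_le_integral_norm F
    _ ≤ ∫ y, ∫ s, G s y ∂μ ∂ρ :=
        integral_mono_of_nonneg (Filter.Eventually.of_forall fun y => abs_nonneg _)
          hprod.integral_prod_right (Filter.Eventually.of_forall hF)
    _ = ∫ s, ∫ y, G s y ∂ρ ∂μ := (integral_integral_swap hprod).symm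
    _ ≤ ∫ _, C ∂μ := integral_mono_ae hprod.integral_prod_left (integrable_const C) hGC
    _ = μ.real univ * C := by rw [integral_const, smul_eq_mul]

section Weighted

variable {Y : Type*} [MeasurableSpace Y] {μ : Measure Y} {f w k : Y → ℝ} {F : ℝ}

theorem integrable_mul_of_abs_le_mul (hfm : Measurable f) (hk : Measurable k)
    (hk0 : ∀ y, 0 ≤ k y) (hf : ∀ y, |f y| ≤ F * w y) (hwk : Integrable (fun y => w y * k y) μ) :
    Integrable (fun y => f y * k y) μ :=
  (hwk.const_mul F).mono' (by fun_prop) (Filter.Eventually.of_forall fun y => by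
    rw [Real.norm_eq_abs, abs_mul, abs_of_nonneg (hk0 y), ← mul_assoc]
    exact mul_le_mul_of_nonneg_right (hf y) (hk0 y))

theorem integrable_abs_mul_of_abs_le_mul (hfm : Measurable f) (hk : Measurable k)
    (hk0 : ∀ y, 0 ≤ k y) (hf : ∀ y, |f y| ≤ F * w y) (hwk : Integrable (fun y => w y * k y) μ) :
    Integrable (fun y => |f y| * k y) μ := by
  simpa only [abs_mul, abs_of_nonneg (hk0 _)] using
    (integrable_mul_of_abs_le_mul hfm hk hk0 hf hwk).abs

theorem integral_abs_mul_le_of_abs_le_mul (hfm : Measurable f) (hk : Measurable k)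
    (hk0 : ∀ y, 0 ≤ k y) (hf : ∀ y, |f y| ≤ F * w y) (hwk : Integrable (fun y => w y * k y) μ) :
    ∫ y, |f y| * k y ∂μ ≤ F * ∫ y, w y * k y ∂μ := by
  rw [← integral_const_mul]
  refine integral_mono (integrable_abs_mul_of_abs_le_mul hfm hk hk0 hf hwk) (hwk.const_mul F)
    fun y => ?_
  rw [← mul_assoc]
  exact mul_le_mul_of_nonneg_right (hf y) (hk0 y)

end Weighted

theorem abs_le_rpow_one_div_add_abs {r : ℝ} (hr : r ≠ 0) (x : ℝ) :
    |x| ≤ ((1 + |x|) ^ r) ^ (1 / r) := by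
  rw [← Real.rpow_mul (by positivity), mul_one_div_cancel hr, Real.rpow_one]
  linarith

theorem volume_real_uIoc (a b : ℝ) : (volume.restrict (uIoc a b)).real univ = |b - a| := by
  rw [measureReal_restrict_apply_univ]
  simp [uIoc, Real.volume_real_Ioc, max_sub_min_eq_abs]

section Density

variable {ν : ℝ → ℝ} {A : ℝ}

theorem nonneg_of_abs_deriv_le_mul (hpos : ∀ t, 0 < ν t) (hA : ∀ t, |deriv ν t| ≤ A * ν t) :
    0 ≤ A :=
  nonneg_of_mul_nonneg_left ((abs_nonneg _).trans (hA 0)) (hpos 0)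

theorem abs_sub_comp_shift_le (hdiff : Differentiable ℝ ν) (hA : ∀ t, |deriv ν t| ≤ A * ν t)
    (x y α α' : ℝ) :
    |ν (y - α * x) - ν (y - α' * x)| ≤ ∫ s in uIoc α' α, |x| * A * ν (y - s * x) := by
  have hderiv : ∀ s, HasDerivAt (fun s => ν (y - s * x)) (deriv ν (y - s * x) * -x) s := fun s =>
    (hdiff _).hasDerivAt.comp s (by simpa using ((hasDerivAt_id s).mul_const x).const_sub y)
  have hν : Continuous ν := hdiff.continuous
  refine abs_sub_le_integral_uIoc_of_abs_deriv_le (fun s => (hderiv s).differentiableAt)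
    (by fun_prop) (fun s => ?_) α' α
  have := mul_le_mul_of_nonneg_right (hA (y - s * x)) (abs_nonneg x)
  rw [(hderiv s).deriv, abs_mul, abs_neg]
  linarith

theorem abs_sub_mul_comp_shift_le (hdiff : Differentiable ℝ ν)
    (hA : ∀ t, |deriv ν t| ≤ A * ν t) (f : ℝ → ℝ) (x y α α' : ℝ) :
    |f y * ν (y - α * x) - f y * ν (y - α' * x)| ≤
      ∫ s in uIoc α' α, |x| * A * (|f y| * ν (y - s * x)) := by
  rw [← mul_sub, abs_mul]
  calc _ ≤ |f y| * ∫ s in uIoc α' α, |x| * A * ν (y - s * x) :=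
        mul_le_mul_of_nonneg_left (abs_sub_comp_shift_le hdiff hA x y α α') (abs_nonneg _)
    _ = _ := by
        rw [← integral_const_mul]
        congr 1
        ext s
        ring

theorem abs_integral_sub_comp_shift_le (hpos : ∀ t, 0 < ν t) (hdiff : Differentiable ℝ ν)
    (hA : ∀ t, |deriv ν t| ≤ A * ν t) {f w : ℝ → ℝ} (hfm : Measurable f) {F C : ℝ}
    (hF : 0 ≤ F) (hf : ∀ y, |f y| ≤ F * w y) {x α α' : ℝ}
    (hwint : ∀ s ∈ uIcc α' α, Integrable fun y => w y * ν (y - s * x))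
    (hwC : ∀ s ∈ uIcc α' α, ∫ y, w y * ν (y - s * x) ≤ C) :
    |(∫ y, f y * ν (y - α * x)) - ∫ y, f y * ν (y - α' * x)| ≤
      |α - α'| * (|x| * A * (F * C)) := by
  have hν : Continuous ν := hdiff.continuous
  have hA0 : 0 ≤ A := nonneg_of_abs_deriv_le_mul hpos hA
  have hk {s : ℝ} : Measurable fun y => ν (y - s * x) := by fun_prop
  have hk0 {s : ℝ} (y : ℝ) : 0 ≤ ν (y - s * x) := (hpos _).le
  have hP {s : ℝ} (hs : s ∈ uIcc α' α) : Integrable fun y => f y * ν (y - s * x) :=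
    integrable_mul_of_abs_le_mul hfm hk hk0 hf (hwint s hs)
  have : IsFiniteMeasure (volume.restrict (uIoc α' α)) :=
    isFiniteMeasure_restrict.mpr measure_Ioc_lt_top.ne
  have hsection : ∀ᵐ s ∂volume.restrict (uIoc α' α),
      Integrable (fun y => |x| * A * (|f y| * ν (y - s * x))) ∧
        ∫ y, |x| * A * (|f y| * ν (y - s * x)) ≤ |x| * A * (F * C) := by
    refine (ae_restrict_iff' measurableSet_uIoc).mpr (Filter.Eventually.of_forall fun s hs => ?_)
    have hs' := uIoc_subset_uIcc hs
    refine ⟨(integrable_abs_mul_of_abs_le_mul hfm hk hk0 hf (hwint s hs')).const_mul _, ?_⟩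
    rw [integral_const_mul]
    gcongr
    exact (integral_abs_mul_le_of_abs_le_mul hfm hk hk0 hf (hwint s hs')).trans
      (mul_le_mul_of_nonneg_left (hwC s hs') hF)
  have key := abs_integral_le_of_le_integral_kernel
    (G := fun s y => |x| * A * (|f y| * ν (y - s * x)))
    (Measurable.aestronglyMeasurable (by fun_prop))
    (fun s y => mul_nonneg (mul_nonneg (abs_nonneg x) hA0) (mul_nonneg (abs_nonneg _) (hk0 y)))
    (hsection.mono fun _ => And.left) (hsection.mono fun _ => And.right)
    (abs_sub_mul_comp_shift_le hdiff hA f x · α α')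
  rwa [integral_sub (hP right_mem_uIcc) (hP left_mem_uIcc), volume_real_uIoc] at key

end Density

theorem stmt14_general (ν : ℝ → ℝ) (hpos : ∀ t, 0 < ν t) (hdiff : Differentiable ℝ ν)
    (A₁ : ℝ) (hA₁ : ∀ t, |deriv ν t| ≤ A₁ * ν t)
    (r : ℝ) (hr : 1 ≤ r) (β : ℝ)
    (a₀ : ℝ)
    (B : ℝ)
    (hBint : ∀ α ∈ Set.Icc (-a₀) a₀, ∀ x : ℝ,
      Integrable (fun y => ((1 + |y|) ^ r) ^ β * ν (y - α * x)))
    (hB : ∀ α ∈ Set.Icc (-a₀) a₀, ∀ x : ℝ,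
      (∫ y, ((1 + |y|) ^ r) ^ β * ν (y - α * x)) ≤ B * ((1 + |x|) ^ r) ^ β)
    (f : ℝ → ℝ) (hfm : Measurable f) (F : ℝ) (hF : 0 ≤ F)
    (hf : ∀ y, |f y| ≤ F * ((1 + |y|) ^ r) ^ β)
    (α α' : ℝ) (hα : α ∈ Set.Ioo (-a₀) a₀) (hα' : α' ∈ Set.Ioo (-a₀) a₀) (x : ℝ) :
    |(∫ y, f y * ν (y - α * x)) - ∫ y, f y * ν (y - α' * x)|
      ≤ |α - α'| * A₁ * B * F * ((1 + |x|) ^ r) ^ (β + 1 / r) := by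
  have hseg : uIcc α' α ⊆ Icc (-a₀) a₀ :=
    uIcc_subset_Icc (Ioo_subset_Icc_self hα') (Ioo_subset_Icc_self hα)
  have key := abs_integral_sub_comp_shift_le hpos hdiff hA₁ hfm hF hf
    (fun s hs => hBint s (hseg hs) x) (fun s hs => hB s (hseg hs) x)
  have hB0 : 0 ≤ B := nonneg_of_mul_nonneg_left
    ((integral_nonneg fun y => mul_nonneg (by positivity) (hpos _).le).trans
      (hB α (hseg right_mem_uIcc) x)) (by positivity)
  have hA₁0 := nonneg_of_abs_deriv_le_mul hpos hA₁
  rw [Real.rpow_add (by positivity)]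
  calc _ ≤ _ := key
    _ = (|α - α'| * A₁ * B * F * ((1 + |x|) ^ r) ^ β) * |x| := by ring
    _ ≤ (|α - α'| * A₁ * B * F * ((1 + |x|) ^ r) ^ β) * ((1 + |x|) ^ r) ^ (1 / r) := by
        exact mul_le_mul_of_nonneg_left
          (abs_le_rpow_one_div_add_abs (by linarith : (0 : ℝ) < r).ne' x) (by positivity)
    _ = _ := by ring

/-- mean-value estimate for the AR(1) operators. For a positive `C¹` density
`ν` with `|ν'| ≤ A₁ ν`, `V(x) = (1+|x|)^r` and any `f` with `|f| ≤ F·V^β`,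
`|(P_α f)(x) - (P_{α'} f)(x)| ≤ |α-α'| A₁ B F V(x)^{β+1/r}`. -/
theorem stmt14 (ν : ℝ → ℝ) (hpos : ∀ t, 0 < ν t) (hdiff : Differentiable ℝ ν)
    (hint : Integrable ν) (hmass : ∫ x, ν x = 1)
    (A₁ : ℝ) (hA₁ : ∀ t, |deriv ν t| ≤ A₁ * ν t)
    (r : ℝ) (hr : 1 ≤ r) (β : ℝ) (hβ : β ∈ Set.Icc (0 : ℝ) 1)
    (a₀ : ℝ) (ha₀ : a₀ ∈ Set.Ioo (0 : ℝ) 1)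
    (B : ℝ)
    (hBint : ∀ α ∈ Set.Icc (-a₀) a₀, ∀ x : ℝ,
      Integrable (fun y => ((1 + |y|) ^ r) ^ β * ν (y - α * x)))
    (hB : ∀ α ∈ Set.Icc (-a₀) a₀, ∀ x : ℝ,
      (∫ y, ((1 + |y|) ^ r) ^ β * ν (y - α * x)) ≤ B * ((1 + |x|) ^ r) ^ β)
    (f : ℝ → ℝ) (hfm : Measurable f) (F : ℝ) (hF : 0 ≤ F)
    (hf : ∀ y, |f y| ≤ F * ((1 + |y|) ^ r) ^ β)
    (α α' : ℝ) (hα : α ∈ Set.Ioo (-a₀) a₀) (hα' : α' ∈ Set.Ioo (-a₀) a₀) (x : ℝ) :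
    |(∫ y, f y * ν (y - α * x)) - ∫ y, f y * ν (y - α' * x)|
      ≤ |α - α'| * A₁ * B * F * ((1 + |x|) ^ r) ^ (β + 1 / r) :=
  stmt14_general ν hpos hdiff A₁ hA₁ r hr β a₀ B hBint hB f hfm F hF hf α α' hα hα' x
end

section
/- Let ν be a positive probability density on ℝ, (⌊r⌋+1)-times continuously differentiable with sup_t |ν^{(j)}(t)|/ν(t) < ∞ for j = 1,…,⌊r⌋+1, r ≥ 1 not an integer, V(x) = (1+|x|)^r, and P_{k,α}f(x) = (−1)^k x^k ∫ f(y)ν^{(k)}(y−αx)dy for k = 0,…,⌊r⌋. If β, β' ∈ [0,1] with β + k/r < β' ≤ 1, then α ↦ P_{k,α} is continuous from (−a₀,a₀) to L(B_β, B_{β'}); more precisely, with σ = r(β'−β) − k ∈ (0,1], ‖P_{k,α} − P_{k,α'}‖_{β,β'} ≤ 2AB|α−α'|^σ for all α,α' ∈ (−a₀,a₀), where A = max_{0≤j≤⌊r⌋+1} sup_t |ν^{(j)}(t)|/ν(t) and B satisfies P_α V^β ≤ B V^β uniformly in |α| ≤ a₀. -/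
/-!
Write `Φ(t) = ∫ f(y) ν^{(k)}(y - t x) dy`, so that `P_{k,α} f(x) - P_{k,α'} f(x)` is
`(-x)^k (Φ(α) - Φ(α'))`. Since `|ν^{(j)}| ≤ A ν`, every `∫ f(y) ν^{(j)}(y - t x) dy` is bounded by
`M = A ‖f‖_β B V(x)^β`. This gives the crude bound `|Φ(α) - Φ(α')| ≤ 2M`, and, since
`Φ'(t) = -x ∫ f(y) ν^{(k+1)}(y - t x) dy`, the Lipschitz bound `|Φ(α) - Φ(α')| ≤ M |x| |α - α'|`.
Interpolating, `|Φ(α) - Φ(α')| ≤ 2M ((1 + |x|) |α - α'|)^σ`, and the factor `|x|^k` turns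
`V(x)^β (1 + |x|)^σ` into at most `V(x)^{β'}`, as `k + rβ + σ = rβ'`.
Differentiation under the integral is justified because `|ν'| ≤ A ν` makes `log ν` `A`-Lipschitz,
so `ν(y - t x) ≤ e^{A|x|} ν(y - t₀ x)` for `|t - t₀| < 1`.
-/

open MeasureTheory Set

/-- The formal derivative operators `P_{k,α} f(x) = (-1)^k x^k ∫ f(y) ν^{(k)}(y-αx) dy` of the
AR(1) transition operator. -/
noncomputable def arOpD (ν : ℝ → ℝ) (k : ℕ) (α : ℝ) (f : ℝ → ℝ) (x : ℝ) : ℝ :=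
  (-1 : ℝ) ^ k * x ^ k * ∫ y, f y * iteratedDeriv k ν (y - α * x)

open Real

theorem le_mul_exp_abs_sub_of_abs_deriv_le {ν : ℝ → ℝ} {A : ℝ} (hpos : ∀ t, 0 < ν t)
    (hd : Differentiable ℝ ν) (hA : ∀ t, |deriv ν t| ≤ A * ν t) (u v : ℝ) :
    ν u ≤ ν v * exp (A * |u - v|) := by
  have hlog : |log (ν u) - log (ν v)| ≤ A * |u - v| := by
    simpa only [Real.norm_eq_abs] using
      (convex_univ : Convex ℝ (univ : Set ℝ)).norm_image_sub_le_of_norm_hasDerivWithin_le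
        (fun w _ => (((hd w).hasDerivAt).log (hpos w).ne').hasDerivWithinAt)
        (fun w _ => by
          rw [Real.norm_eq_abs, abs_div, abs_of_pos (hpos w), div_le_iff₀ (hpos w)]
          exact hA w)
        (mem_univ v) (mem_univ u)
  calc ν u = exp (log (ν u)) := (exp_log (hpos u)).symm
    _ ≤ exp (log (ν v) + A * |u - v|) :=
        exp_le_exp.2 (by linarith [le_abs_self (log (ν u) - log (ν v))])
    _ = ν v * exp (A * |u - v|) := by rw [exp_add, exp_log (hpos v)]

section WeightedBounds

variable {α : Type*} {f g w ψ : α → ℝ} {F A : ℝ}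

theorem abs_mul_le_of_abs_le (hf : ∀ y, |f y| ≤ F * w y) (hg : ∀ y, |g y| ≤ A * ψ y) (y : α) :
    |f y * g y| ≤ A * F * (w y * ψ y) := by
  rw [abs_mul]
  calc |f y| * |g y| ≤ F * w y * (A * ψ y) :=
        mul_le_mul (hf y) (hg y) (abs_nonneg _) ((abs_nonneg _).trans (hf y))
    _ = A * F * (w y * ψ y) := by ring

variable [MeasurableSpace α] {μ : Measure α}

theorem integrable_mul_of_abs_le (hm : AEStronglyMeasurable (fun y => f y * g y) μ)
    (hf : ∀ y, |f y| ≤ F * w y) (hg : ∀ y, |g y| ≤ A * ψ y)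
    (hwψ : Integrable (fun y => w y * ψ y) μ) : Integrable (fun y => f y * g y) μ :=
  (hwψ.const_mul (A * F)).mono' hm (ae_of_all _ (abs_mul_le_of_abs_le hf hg))

theorem abs_integral_mul_le_of_abs_le (hf : ∀ y, |f y| ≤ F * w y) (hg : ∀ y, |g y| ≤ A * ψ y)
    (hwψ : Integrable (fun y => w y * ψ y) μ) :
    |∫ y, f y * g y ∂μ| ≤ A * F * ∫ y, w y * ψ y ∂μ := by
  rw [← integral_const_mul]
  exact norm_integral_le_of_norm_le (hwψ.const_mul (A * F))
    (ae_of_all _ fun y => (Real.norm_eq_abs _).trans_le (abs_mul_le_of_abs_le hf hg y))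

end WeightedBounds

theorem hasDerivAt_integral_mul_comp_sub_mul {f g g' ν w : ℝ → ℝ} {A F x t₀ : ℝ}
    (hfm : Measurable f) (hf : ∀ y, |f y| ≤ F * w y)
    (hg : ∀ u, HasDerivAt g (g' u) u) (hg'c : Continuous g')
    (hgν : ∀ u, |g u| ≤ A * ν u) (hg'ν : ∀ u, |g' u| ≤ A * ν u)
    (hA : 0 ≤ A) (hν0 : ∀ u, 0 ≤ ν u) (hν : ∀ u v, ν u ≤ ν v * exp (A * |u - v|))
    (hwν : Integrable (fun y => w y * ν (y - t₀ * x))) :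
    HasDerivAt (fun t => ∫ y, f y * g (y - t * x)) (-x * ∫ y, f y * g' (y - t₀ * x)) t₀ := by
  have hgc : Continuous g := continuous_iff_continuousAt.2 fun u => (hg u).continuousAt
  have hmeas : ∀ {h : ℝ → ℝ}, Continuous h → ∀ t : ℝ,
      AEStronglyMeasurable (fun y => f y * h (y - t * x)) volume := fun hc t =>
    hfm.aestronglyMeasurable.mul (hc.comp (continuous_sub_right _)).aestronglyMeasurable
  have hdom : ∀ y, ∀ t ∈ Metric.ball t₀ 1,
      |f y * (-x * g' (y - t * x))| ≤ A * F * (|x| * exp (A * |x|)) * (w y * ν (y - t₀ * x)) := by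
    intro y t ht
    have hshift : ν (y - t * x) ≤ ν (y - t₀ * x) * exp (A * |x|) := by
      refine (hν _ _).trans (mul_le_mul_of_nonneg_left (exp_le_exp.2 ?_) (hν0 _))
      have ht' : |t₀ - t| ≤ 1 := by
        rw [abs_sub_comm]; exact (Metric.mem_ball.1 ht).le
      calc A * |y - t * x - (y - t₀ * x)| = A * (|t₀ - t| * |x|) := by
            rw [← abs_mul]; ring_nf
        _ ≤ A * |x| := by gcongr; exact mul_le_of_le_one_left (abs_nonneg x) ht'
    have hFw : 0 ≤ F * w y := (abs_nonneg _).trans (hf y)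
    rw [abs_mul, abs_mul, abs_neg]
    calc |f y| * (|x| * |g' (y - t * x)|) ≤ F * w y * (|x| * (A * ν (y - t * x))) := by
          gcongr; exacts [hf y, hg'ν _]
      _ ≤ F * w y * (|x| * (A * (ν (y - t₀ * x) * exp (A * |x|)))) := by gcongr
      _ = A * F * (|x| * exp (A * |x|)) * (w y * ν (y - t₀ * x)) := by ring
  have key := hasDerivAt_integral_of_dominated_loc_of_deriv_le (μ := volume)
    (F := fun t y => f y * g (y - t * x)) (F' := fun t y => f y * (-x * g' (y - t * x)))
    (Metric.ball_mem_nhds t₀ one_pos) (Filter.Eventually.of_forall (hmeas hgc))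
    (integrable_mul_of_abs_le (hmeas hgc t₀) hf (fun y => hgν _) hwν)
    (hfm.aestronglyMeasurable.mul
      (continuous_const.mul (hg'c.comp (continuous_sub_right _))).aestronglyMeasurable)
    (ae_of_all _ hdom) (hwν.const_mul _)
    (ae_of_all _ fun y t _ => by
      simpa [mul_comm, mul_left_comm] using
        ((hg _).comp t ((hasDerivAt_mul_const x).const_sub y)).const_mul (f y))
  simpa only [mul_left_comm _ (-x), integral_const_mul] using key.2

theorem abs_integral_mul_comp_sub_mul_sub_le {f g g' ν w : ℝ → ℝ} {A F M x a b : ℝ}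
    {s : Set ℝ} (hs : Convex ℝ s) (ha : a ∈ s) (hb : b ∈ s)
    (hfm : Measurable f) (hf : ∀ y, |f y| ≤ F * w y)
    (hg : ∀ u, HasDerivAt g (g' u) u) (hg'c : Continuous g')
    (hgν : ∀ u, |g u| ≤ A * ν u) (hg'ν : ∀ u, |g' u| ≤ A * ν u)
    (hA : 0 ≤ A) (hν0 : ∀ u, 0 ≤ ν u) (hν : ∀ u v, ν u ≤ ν v * exp (A * |u - v|))
    (hwν : ∀ t ∈ s, Integrable (fun y => w y * ν (y - t * x)))
    (hM : ∀ t ∈ s, |∫ y, f y * g' (y - t * x)| ≤ M) :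
    |(∫ y, f y * g (y - a * x)) - ∫ y, f y * g (y - b * x)| ≤ |x| * M * |a - b| := by
  simpa only [Real.norm_eq_abs] using hs.norm_image_sub_le_of_norm_hasDerivWithin_le
    (fun t ht => (hasDerivAt_integral_mul_comp_sub_mul hfm hf hg hg'c hgν hg'ν hA hν0 hν
      (hwν t ht)).hasDerivWithinAt)
    (fun t ht => by
      rw [norm_mul, norm_neg, Real.norm_eq_abs, Real.norm_eq_abs]; gcongr; exact hM t ht)
    hb ha

theorem le_two_mul_mul_rpow_of_le_min {X M t σ : ℝ} (hX : 0 ≤ X) (hcrude : X ≤ 2 * M)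
    (hlip : X ≤ M * t) (ht : 0 ≤ t) (hσ0 : 0 ≤ σ) (hσ1 : σ ≤ 1) : X ≤ 2 * M * t ^ σ := by
  have hM : 0 ≤ M := by linarith
  rcases le_total t 1 with ht1 | ht1
  · calc X ≤ M * t := hlip
      _ ≤ M * t ^ σ := by gcongr; exact self_le_rpow_of_le_one ht ht1 hσ1
      _ ≤ 2 * M * t ^ σ := by nlinarith [rpow_nonneg ht σ]
  · calc X ≤ 2 * M := hcrude
      _ ≤ 2 * M * t ^ σ := le_mul_of_one_le_right (by linarith) (one_le_rpow ht1 hσ0)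

theorem abs_integral_iteratedDeriv_comp_sub_mul_sub_le {ν f w : ℝ → ℝ} {n k : ℕ}
    {A F M x a b σ : ℝ} {s : Set ℝ} (hpos : ∀ t, 0 < ν t)
    (hsmooth : ContDiff ℝ ((n + 1 : ℕ) : ℕ∞) ν)
    (hA : ∀ j ≤ n + 1, ∀ t, |iteratedDeriv j ν t| ≤ A * ν t) (hk : k ≤ n)
    (hs : Convex ℝ s) (ha : a ∈ s) (hb : b ∈ s) (hfm : Measurable f) (hf : ∀ y, |f y| ≤ F * w y)
    (hwν : ∀ t ∈ s, Integrable (fun y => w y * ν (y - t * x)))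
    (hM : ∀ j ≤ n + 1, ∀ t ∈ s, |∫ y, f y * iteratedDeriv j ν (y - t * x)| ≤ M)
    (hσ0 : 0 ≤ σ) (hσ1 : σ ≤ 1) :
    |(∫ y, f y * iteratedDeriv k ν (y - a * x)) - ∫ y, f y * iteratedDeriv k ν (y - b * x)|
      ≤ 2 * M * ((1 + |x|) * |a - b|) ^ σ := by
  have hA0 : 0 ≤ A := nonneg_of_mul_nonneg_left ((abs_nonneg _).trans (hA 0 (by omega) 0)) (hpos 0)
  have hM0 : 0 ≤ M := (abs_nonneg _).trans (hM k (by omega) a ha)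
  have hcrude := (abs_sub _ _).trans (add_le_add (hM k (by omega) a ha) (hM k (by omega) b hb))
  have hderiv : ∀ u, HasDerivAt (iteratedDeriv k ν) (iteratedDeriv (k + 1) ν u) u := fun u => by
    rw [iteratedDeriv_succ]
    exact (hsmooth.differentiable_iteratedDeriv k (by exact_mod_cast Nat.lt_succ_of_le hk)
      u).hasDerivAt
  have hlip := abs_integral_mul_comp_sub_mul_sub_le hs ha hb hfm hf hderiv
    (hsmooth.continuous_iteratedDeriv (k + 1) (by exact_mod_cast Nat.succ_le_succ hk))
    (hA k (by omega)) (hA (k + 1) (by omega)) hA0 (fun u => (hpos u).le)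
    (le_mul_exp_abs_sub_of_abs_deriv_le hpos (hsmooth.differentiable (by simp))
      fun t => by simpa using hA 1 (by omega) t)
    hwν (hM (k + 1) (by omega))
  refine le_two_mul_mul_rpow_of_le_min (abs_nonneg _) (by linarith) ?_ (by positivity) hσ0 hσ1
  nlinarith [abs_nonneg (a - b), abs_nonneg x]

theorem abs_arOpD_sub (ν : ℝ → ℝ) (k : ℕ) (α α' : ℝ) (f : ℝ → ℝ) (x : ℝ) :
    |arOpD ν k α f x - arOpD ν k α' f x| =
      |x| ^ k * |(∫ y, f y * iteratedDeriv k ν (y - α * x)) -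
        ∫ y, f y * iteratedDeriv k ν (y - α' * x)| := by
  simp only [arOpD, ← mul_sub, abs_mul, abs_pow, abs_neg, abs_one, one_pow, one_mul]

theorem pow_abs_mul_rpow_mul_rpow_le {r β β' σ : ℝ} {k : ℕ} (hσ : σ = r * (β' - β) - k)
    (x : ℝ) : |x| ^ k * ((1 + |x|) ^ r) ^ β * (1 + |x|) ^ σ ≤ ((1 + |x|) ^ r) ^ β' := by
  have hc : 0 < 1 + |x| := by positivity
  calc |x| ^ k * ((1 + |x|) ^ r) ^ β * (1 + |x|) ^ σ
      ≤ (1 + |x|) ^ (k : ℝ) * ((1 + |x|) ^ r) ^ β * (1 + |x|) ^ σ := by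
        rw [rpow_natCast]; gcongr; linarith
    _ = ((1 + |x|) ^ r) ^ β' := by
        rw [← rpow_mul hc.le, ← rpow_mul hc.le, ← rpow_add hc, ← rpow_add hc, hσ]
        ring_nf

theorem stmt15_general (ν : ℝ → ℝ) (hpos : ∀ t, 0 < ν t)
    (r : ℝ)
    (hsmooth : ContDiff ℝ ((Nat.floor r + 1 : ℕ) : ℕ∞) ν)
    (A : ℝ) (hA : ∀ j ≤ Nat.floor r + 1, ∀ t, |iteratedDeriv j ν t| ≤ A * ν t)
    (a₀ : ℝ)
    (β β' : ℝ) (k : ℕ) (hk : k ≤ Nat.floor r)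
    (σ : ℝ) (hσdef : σ = r * (β' - β) - k) (hσ : σ ∈ Set.Ioc (0 : ℝ) 1)
    (B : ℝ)
    (hBint : ∀ α ∈ Set.Icc (-a₀) a₀, ∀ x : ℝ,
      Integrable (fun y => ((1 + |y|) ^ r) ^ β * ν (y - α * x)))
    (hB : ∀ α ∈ Set.Icc (-a₀) a₀, ∀ x : ℝ,
      (∫ y, ((1 + |y|) ^ r) ^ β * ν (y - α * x)) ≤ B * ((1 + |x|) ^ r) ^ β)
    (f : ℝ → ℝ) (hfm : Measurable f) (F : ℝ) (hF : 0 ≤ F)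
    (hf : ∀ y, |f y| ≤ F * ((1 + |y|) ^ r) ^ β)
    (α α' : ℝ) (hα : α ∈ Set.Ioo (-a₀) a₀) (hα' : α' ∈ Set.Ioo (-a₀) a₀) (x : ℝ) :
    |arOpD ν k α f x - arOpD ν k α' f x|
      ≤ 2 * A * B * |α - α'| ^ σ * F * ((1 + |x|) ^ r) ^ β' := by
  have hA0 : 0 ≤ A := nonneg_of_mul_nonneg_left ((abs_nonneg _).trans (hA 0 (by omega) 0)) (hpos 0)
  have hB0 : 0 ≤ B := by
    have h := hB α (Ioo_subset_Icc_self hα) 0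
    simp only [abs_zero, add_zero, one_rpow, mul_one] at h
    exact (integral_nonneg fun y => by positivity [hpos (y - α * 0)]).trans h
  have hbound : ∀ j ≤ Nat.floor r + 1, ∀ t ∈ Icc (-a₀) a₀,
      |∫ y, f y * iteratedDeriv j ν (y - t * x)| ≤ A * F * (B * ((1 + |x|) ^ r) ^ β) :=
    fun j hj t ht =>
      (abs_integral_mul_le_of_abs_le hf (fun y => hA j hj _) (hBint t ht x)).trans
        (mul_le_mul_of_nonneg_left (hB t ht x) (mul_nonneg hA0 hF))
  rw [abs_arOpD_sub]
  calc _ ≤ |x| ^ k * (2 * (A * F * (B * ((1 + |x|) ^ r) ^ β)) * ((1 + |x|) * |α - α'|) ^ σ) := by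
        gcongr
        exact abs_integral_iteratedDeriv_comp_sub_mul_sub_le hpos hsmooth hA hk (convex_Icc _ _)
          (Ioo_subset_Icc_self hα) (Ioo_subset_Icc_self hα') hfm hf (fun t ht => hBint t ht x)
          hbound hσ.1.le hσ.2
    _ = 2 * A * B * |α - α'| ^ σ * F * (|x| ^ k * ((1 + |x|) ^ r) ^ β * (1 + |x|) ^ σ) := by
        rw [mul_rpow (by positivity) (abs_nonneg _)]; ring
    _ ≤ 2 * A * B * |α - α'| ^ σ * F * ((1 + |x|) ^ r) ^ β' := by
        gcongr; exact pow_abs_mul_rpow_mul_rpow_le hσdef x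

/-- Lemma 2.2 (i), quantitative form: Hölder continuity of `α ↦ P_{k,α}` from
`B_β` to `B_{β'}` when `β + k/r < β' ≤ 1`, with exponent `σ = r(β'-β) - k ∈ (0,1]`:
`‖P_{k,α} - P_{k,α'}‖_{β,β'} ≤ 2AB|α-α'|^σ`. -/
theorem stmt15 (ν : ℝ → ℝ) (hpos : ∀ t, 0 < ν t)
    (hint : Integrable ν) (hmass : ∫ x, ν x = 1)
    (r : ℝ) (hr : 1 ≤ r) (hrnotint : ∀ n : ℕ, (n : ℝ) ≠ r)
    (hsmooth : ContDiff ℝ ((Nat.floor r + 1 : ℕ) : ℕ∞) ν)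
    (A : ℝ) (hA : ∀ j ≤ Nat.floor r + 1, ∀ t, |iteratedDeriv j ν t| ≤ A * ν t)
    (a₀ : ℝ) (ha₀ : a₀ ∈ Set.Ioo (0 : ℝ) 1)
    (β β' : ℝ) (hβ : 0 ≤ β) (k : ℕ) (hk : k ≤ Nat.floor r)
    (hββ' : β + (k : ℝ) / r < β') (hβ'1 : β' ≤ 1)
    (σ : ℝ) (hσdef : σ = r * (β' - β) - k) (hσ : σ ∈ Set.Ioc (0 : ℝ) 1)
    (B : ℝ)
    (hBint : ∀ α ∈ Set.Icc (-a₀) a₀, ∀ x : ℝ,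
      Integrable (fun y => ((1 + |y|) ^ r) ^ β * ν (y - α * x)))
    (hB : ∀ α ∈ Set.Icc (-a₀) a₀, ∀ x : ℝ,
      (∫ y, ((1 + |y|) ^ r) ^ β * ν (y - α * x)) ≤ B * ((1 + |x|) ^ r) ^ β)
    (f : ℝ → ℝ) (hfm : Measurable f) (F : ℝ) (hF : 0 ≤ F)
    (hf : ∀ y, |f y| ≤ F * ((1 + |y|) ^ r) ^ β)
    (α α' : ℝ) (hα : α ∈ Set.Ioo (-a₀) a₀) (hα' : α' ∈ Set.Ioo (-a₀) a₀) (x : ℝ) :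
    |arOpD ν k α f x - arOpD ν k α' f x|
      ≤ 2 * A * B * |α - α'| ^ σ * F * ((1 + |x|) ^ r) ^ β' :=
  stmt15_general ν hpos r hsmooth A hA a₀ β β' k hk σ hσdef hσ B hBint hB f hfm F hF hf α α' hα hα'
    x
end

section
/- Suppose Π_ε and Π₀ are rank-one projections of the form Π_ε f = π_ε(f) 1_X with π_ε, π₀ probability measures such that π_ε(V), π₀(V) < ∞, and Π_ε, Π₀ are given by the contour integrals Π = (1/2πi)∮_Γ (zI − P)^{-1} dz over a circle Γ centered at 1 of radius ρ < (1−κ)/2, with M := sup_{z∈Γ} ‖(zI−P_ε)^{-1}‖_1 < ∞ and M₀ := sup_{z∈Γ} ‖(zI−P₀)^{-1}‖_β < ∞. Then for every f ∈ B_β: |π_ε(f) − π₀(f)| ≤ ρ·M·M₀·‖P_ε − P₀‖_{β,1}·‖f‖_β. -/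
open MeasureTheory Metric Complex

/-- Corollary 2, abstract form: let `ι : B_β → B_1` be the continuous
inclusion, `one ∈ B_1` the function `1_X` with `‖one‖ = 1`, and suppose the rank-one spectral
projections `Π_ε f = π_ε(f)·1_X`, `Π₀ f = π₀(f)·1_X` are given by the contour integrals of
the resolvents `Rε z = (zI-Pε)^{-1}` (on `B_1`) and `R₀ z = (zI-P₀)^{-1}` (on `B_β`) over the
circle `Γ` of center `1` and radius `ρ`, with `M = sup_Γ ‖Rε‖`, `M₀ = sup_Γ ‖R₀‖`. Then
`|π_ε(f) - π₀(f)| ≤ ρ·M·M₀·‖Pε - P₀‖_{β,1}·‖f‖_β` for all `f ∈ B_β`. -/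
theorem stmt18 {E F : Type*} [NormedAddCommGroup E] [NormedSpace ℂ E] [CompleteSpace E]
    [NormedAddCommGroup F] [NormedSpace ℂ F] [CompleteSpace F]
    (ι : E →L[ℂ] F) (one : F) (hone : ‖one‖ = 1)
    (P₀E : E →L[ℂ] E) (P₀ : F →L[ℂ] F) (hcompat : ι.comp P₀E = P₀.comp ι)
    (Pε : F →L[ℂ] F) (κ ρ : ℝ) (hκ : κ ∈ Set.Ioo (0 : ℝ) 1) (hρ : 0 < ρ)
    (hρκ : ρ < (1 - κ) / 2)
    (Rε : ℂ → (F →L[ℂ] F)) (R₀ : ℂ → (E →L[ℂ] E))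
    (hRε : ∀ z ∈ sphere (1 : ℂ) ρ,
      (z • (ContinuousLinearMap.id ℂ F) - Pε).comp (Rε z) = ContinuousLinearMap.id ℂ F ∧
      (Rε z).comp (z • (ContinuousLinearMap.id ℂ F) - Pε) = ContinuousLinearMap.id ℂ F)
    (hR₀ : ∀ z ∈ sphere (1 : ℂ) ρ,
      (z • (ContinuousLinearMap.id ℂ E) - P₀E).comp (R₀ z) = ContinuousLinearMap.id ℂ E ∧
      (R₀ z).comp (z • (ContinuousLinearMap.id ℂ E) - P₀E) = ContinuousLinearMap.id ℂ E)
    (M M₀ : ℝ) (hM : ∀ z ∈ sphere (1 : ℂ) ρ, ‖Rε z‖ ≤ M)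
    (hM₀ : ∀ z ∈ sphere (1 : ℂ) ρ, ‖R₀ z‖ ≤ M₀)
    (πε π₀ : E →L[ℂ] ℂ)
    (hPiEps : (fun f : E => πε f • one) =
      fun f : E => ((2 * Real.pi * I)⁻¹ • ∮ z in C(1, ρ), (Rε z).comp ι) f)
    (hPiZero : (fun f : E => π₀ f • one) =
      fun f : E => ((2 * Real.pi * I)⁻¹ • ∮ z in C(1, ρ), ι.comp (R₀ z)) f) :
    ∀ f : E, ‖πε f - π₀ f‖ ≤ ρ * M * M₀ * ‖Pε.comp ι - ι.comp P₀E‖ * ‖f‖ := by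
  intro f
  set D : E →L[ℂ] F := Pε.comp ι - ι.comp P₀E with hD
  -- the sphere is nonempty, so M, M₀ are nonnegative
  have hmem : (1 + ρ : ℂ) ∈ sphere (1 : ℂ) ρ := by
    rw [mem_sphere_iff_norm, add_sub_cancel_left, Complex.norm_real,
      Real.norm_of_nonneg hρ.le]
  have hMnn : 0 ≤ M := le_trans (norm_nonneg _) (hM _ hmem)
  have hM₀nn : 0 ≤ M₀ := le_trans (norm_nonneg _) (hM₀ _ hmem)
  -- Rε and R₀ agree with Ring.inverse on the sphere, hence are continuous there
  have hRεeq : ∀ z ∈ sphere (1 : ℂ) ρ,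
      Rε z = Ring.inverse (z • (1 : F →L[ℂ] F) - Pε) := by
    intro z hz
    have h := hRε z hz
    exact (Ring.inverse_unit ⟨_, Rε z, h.1, h.2⟩).symm
  have hR₀eq : ∀ z ∈ sphere (1 : ℂ) ρ,
      R₀ z = Ring.inverse (z • (1 : E →L[ℂ] E) - P₀E) := by
    intro z hz
    have h := hR₀ z hz
    exact (Ring.inverse_unit ⟨_, R₀ z, h.1, h.2⟩).symm
  have hRεcont : ContinuousOn Rε (sphere (1 : ℂ) ρ) := by
    apply ContinuousOn.congr (f := fun z => Ring.inverse (z • (1 : F →L[ℂ] F) - Pε))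
      _ hRεeq
    intro z hz
    have h := hRε z hz
    have hc : ContinuousAt (fun z : ℂ => z • (1 : F →L[ℂ] F) - Pε) z :=
      ((continuous_id.smul continuous_const).sub continuous_const).continuousAt
    have hinv : ContinuousAt Ring.inverse (z • (1 : F →L[ℂ] F) - Pε) :=
      NormedRing.inverse_continuousAt ⟨_, Rε z, h.1, h.2⟩
    exact (ContinuousAt.comp (f := fun w : ℂ => w • (1 : F →L[ℂ] F) - Pε)
      hinv hc).continuousWithinAt
  have hR₀cont : ContinuousOn R₀ (sphere (1 : ℂ) ρ) := by
    apply ContinuousOn.congr (f := fun z => Ring.inverse (z • (1 : E →L[ℂ] E) - P₀E))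
      _ hR₀eq
    intro z hz
    have h := hR₀ z hz
    have hc : ContinuousAt (fun z : ℂ => z • (1 : E →L[ℂ] E) - P₀E) z :=
      ((continuous_id.smul continuous_const).sub continuous_const).continuousAt
    have hinv : ContinuousAt Ring.inverse (z • (1 : E →L[ℂ] E) - P₀E) :=
      NormedRing.inverse_continuousAt ⟨_, R₀ z, h.1, h.2⟩
    exact (ContinuousAt.comp (f := fun w : ℂ => w • (1 : E →L[ℂ] E) - P₀E)
      hinv hc).continuousWithinAt
  -- integrability
  have hint1 : CircleIntegrable (fun z => (Rε z).comp ι) (1 : ℂ) ρ := by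
    apply ContinuousOn.circleIntegrable hρ.le
    exact hRεcont.clm_comp continuousOn_const
  have hint2 : CircleIntegrable (fun z => ι.comp (R₀ z)) (1 : ℂ) ρ := by
    apply ContinuousOn.circleIntegrable hρ.le
    exact continuousOn_const.clm_comp hR₀cont
  -- the resolvent identity on the sphere
  have hres : ∀ z ∈ sphere (1 : ℂ) ρ,
      (Rε z).comp ι - ι.comp (R₀ z) = (Rε z).comp (D.comp (R₀ z)) := by
    intro z hz
    have hA := (hRε z hz).2
    have hB := (hR₀ z hz).1
    have hDeq : D = ι.comp (z • (ContinuousLinearMap.id ℂ E) - P₀E)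
        - (z • (ContinuousLinearMap.id ℂ F) - Pε).comp ι := by
      ext x
      simp [D, ContinuousLinearMap.sub_apply, ContinuousLinearMap.smul_apply]
    rw [hDeq, ContinuousLinearMap.sub_comp, ContinuousLinearMap.comp_sub,
      ContinuousLinearMap.comp_assoc, hB, ContinuousLinearMap.comp_id,
      ← ContinuousLinearMap.comp_assoc, ← ContinuousLinearMap.comp_assoc, hA,
      ContinuousLinearMap.id_comp]
  -- pointwise norm bound on the sphere
  have hptbd : ∀ z ∈ sphere (1 : ℂ) ρ,
      ‖(Rε z).comp ι - ι.comp (R₀ z)‖ ≤ M * M₀ * ‖D‖ := by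
    intro z hz
    rw [hres z hz]
    calc ‖(Rε z).comp (D.comp (R₀ z))‖ ≤ ‖Rε z‖ * ‖D.comp (R₀ z)‖ :=
          ContinuousLinearMap.opNorm_comp_le _ _
      _ ≤ ‖Rε z‖ * (‖D‖ * ‖R₀ z‖) :=
          mul_le_mul_of_nonneg_left (ContinuousLinearMap.opNorm_comp_le _ _) (norm_nonneg _)
      _ ≤ M * (‖D‖ * M₀) :=
          mul_le_mul (hM z hz)
            (mul_le_mul_of_nonneg_left (hM₀ z hz) (norm_nonneg _))
            (mul_nonneg (norm_nonneg _) (norm_nonneg _)) hMnn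
      _ = M * M₀ * ‖D‖ := by ring
  -- the key operator bound
  have hop : ‖(2 * (Real.pi : ℂ) * I)⁻¹ •
      ((∮ z in C(1, ρ), (Rε z).comp ι) - ∮ z in C(1, ρ), ι.comp (R₀ z))‖
      ≤ ρ * (M * M₀ * ‖D‖) := by
    rw [← circleIntegral.integral_sub hint1 hint2]
    exact circleIntegral.norm_two_pi_i_inv_smul_integral_le_of_norm_le_const hρ.le hptbd
  -- conclude
  have h1 := congrFun hPiEps f
  have h2 := congrFun hPiZero f
  have hval : (πε f - π₀ f) • one = ((2 * (Real.pi : ℂ) * I)⁻¹ •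
      ((∮ z in C(1, ρ), (Rε z).comp ι) - ∮ z in C(1, ρ), ι.comp (R₀ z))) f := by
    rw [sub_smul, h1, h2]
    simp [ContinuousLinearMap.sub_apply, smul_sub]
  have hnorm : ‖πε f - π₀ f‖ = ‖(πε f - π₀ f) • one‖ := by
    rw [norm_smul, hone, mul_one]
  rw [hnorm, hval]
  calc ‖((2 * (Real.pi : ℂ) * I)⁻¹ •
      ((∮ z in C(1, ρ), (Rε z).comp ι) - ∮ z in C(1, ρ), ι.comp (R₀ z))) f‖
      ≤ ‖(2 * (Real.pi : ℂ) * I)⁻¹ •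
      ((∮ z in C(1, ρ), (Rε z).comp ι) - ∮ z in C(1, ρ), ι.comp (R₀ z))‖ * ‖f‖ :=
        ContinuousLinearMap.le_opNorm _ _
    _ ≤ ρ * (M * M₀ * ‖D‖) * ‖f‖ := by gcongr
    _ = ρ * M * M₀ * ‖D‖ * ‖f‖ := by ring
end
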